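/- arXiv:2201.00057 — 8 statements merged into one kernel-verified Lean document; each statement's English description precedes it below -/
import Mathlib

section
/- Let Z — X — Y be a Markov chain of discrete random variables with finite sample spaces, and suppose the loss ℓ admits for each x ∈ 𝒳 a unique strictly optimal action a*(x), i.e. E_{Y|X=x}[ℓ(Y, a*(x))] < E_{Y|X=x}[ℓ(Y, a)] for all a ≠ a*(x); write F*(x) = a*(x) for the Bayes predictor. Then the Bayes risks satisfy R(Y|Z) = R(Y|X) if and only if for every optimal predictor g* from Z (i.e. every minimizer of E[ℓ(Y, g(Z))]) and every (x, z) in the support of the joint distribution of (X, Z), we have g*(z) = F*(x). -/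
/-- For a Markov chain `Z — X — Y` on finite spaces with a loss admitting, for each
`x` (with positive probability), a unique strictly optimal action `F x` (the Bayes
predictor), the Bayes risks satisfy `R(Y|Z) = R(Y|X)` iff every optimal predictor
`g` from `Z` satisfies `g z = F x` for all `(x, z)` in the support of `(X, Z)`. -/
theorem bayes_risk_equality_iff_agreement
    {𝒳 𝒴 𝒵 𝒜 : Type*} [Fintype 𝒳] [Fintype 𝒴] [Fintype 𝒵] [Fintype 𝒜] [Nonempty 𝒜]
    (p : 𝒳 → 𝒴 → 𝒵 → ℝ)
    (hp : ∀ x y z, 0 ≤ p x y z)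
    (hp1 : ∑ x, ∑ y, ∑ z, p x y z = 1)
    -- Markov chain Z — X — Y : conditional independence of Y and Z given X
    (hmarkov : ∀ x y z,
      p x y z * (∑ y', ∑ z', p x y' z') = (∑ z', p x y z') * (∑ y', p x y' z))
    (ℓ : 𝒴 → 𝒜 → ℝ)
    (F : 𝒳 → 𝒜)
    -- F is the unique, pointwise strictly optimal Bayes predictor from X
    (hF : ∀ x, 0 < (∑ y, ∑ z, p x y z) → ∀ a, a ≠ F x →
      (∑ y, ∑ z, p x y z * ℓ y (F x)) < ∑ y, ∑ z, p x y z * ℓ y a) :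
    ((⨅ g : 𝒵 → 𝒜, ∑ x, ∑ y, ∑ z, p x y z * ℓ y (g z))
        = ⨅ f : 𝒳 → 𝒜, ∑ x, ∑ y, ∑ z, p x y z * ℓ y (f x))
      ↔ (∀ g : 𝒵 → 𝒜,
          (∀ g' : 𝒵 → 𝒜, (∑ x, ∑ y, ∑ z, p x y z * ℓ y (g z))
              ≤ ∑ x, ∑ y, ∑ z, p x y z * ℓ y (g' z)) →
          ∀ x z, 0 < (∑ y, p x y z) → g z = F x) := by
  classical
  set RZ : (𝒵 → 𝒜) → ℝ := fun g => ∑ x, ∑ y, ∑ z, p x y z * ℓ y (g z) with hRZdef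
  set RX : (𝒳 → 𝒜) → ℝ := fun f => ∑ x, ∑ y, ∑ z, p x y z * ℓ y (f x) with hRXdef
  -- pointwise strict optimality of F
  have hTstrict : ∀ x z, 0 < (∑ y, p x y z) → ∀ a, a ≠ F x →
      (∑ y, p x y z * ℓ y (F x)) < ∑ y, p x y z * ℓ y a := by
    intro x z hpz a ha
    have hpX : 0 < ∑ y', ∑ z', p x y' z' := by
      have h1 : (∑ y, p x y z) ≤ ∑ z', ∑ y, p x y z' := by
        apply Finset.single_le_sum (f := fun z' => ∑ y, p x y z')
        · intro i _; exact Finset.sum_nonneg fun y _ => hp x y i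
        · exact Finset.mem_univ z
      calc (0:ℝ) < ∑ y, p x y z := hpz
        _ ≤ ∑ z', ∑ y, p x y z' := h1
        _ = ∑ y', ∑ z', p x y' z' := Finset.sum_comm
    have hmul : ∀ b : 𝒜, (∑ y, p x y z * ℓ y b) * (∑ y', ∑ z', p x y' z')
        = (∑ y', p x y' z) * ∑ y, (∑ z', p x y z') * ℓ y b := by
      intro b
      rw [Finset.sum_mul, Finset.mul_sum]
      apply Finset.sum_congr rfl
      intro y _
      have h := hmarkov x y z
      calc (p x y z * ℓ y b) * (∑ y', ∑ z', p x y' z')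
          = (p x y z * (∑ y', ∑ z', p x y' z')) * ℓ y b := by ring
        _ = ((∑ z', p x y z') * (∑ y', p x y' z)) * ℓ y b := by rw [h]
        _ = (∑ y', p x y' z) * ((∑ z', p x y z') * ℓ y b) := by ring
    have hFlt : (∑ y, (∑ z', p x y z') * ℓ y (F x)) < ∑ y, (∑ z', p x y z') * ℓ y a := by
      have := hF x hpX a ha
      simpa only [Finset.sum_mul] using this
    have hstep : (∑ y, p x y z * ℓ y (F x)) * (∑ y', ∑ z', p x y' z')
        < (∑ y, p x y z * ℓ y a) * (∑ y', ∑ z', p x y' z') := by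
      rw [hmul (F x), hmul a]
      exact mul_lt_mul_of_pos_left hFlt hpz
    exact lt_of_mul_lt_mul_right hstep (le_of_lt hpX)
  have hT0 : ∀ x z, (∑ y, p x y z) = 0 → ∀ a, (∑ y, p x y z * ℓ y a) = 0 := by
    intro x z h0 a
    have hz : ∀ y ∈ Finset.univ, p x y z = 0 :=
      (Finset.sum_eq_zero_iff_of_nonneg (fun y _ => hp x y z)).mp h0
    exact Finset.sum_eq_zero fun y hy => by rw [hz y hy, zero_mul]
  have hTle : ∀ x z a, (∑ y, p x y z * ℓ y (F x)) ≤ ∑ y, p x y z * ℓ y a := by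
    intro x z a
    rcases (Finset.sum_nonneg fun y _ => hp x y z).lt_or_eq with hpos | h0
    · by_cases ha : a = F x
      · rw [ha]
      · exact le_of_lt (hTstrict x z hpos a ha)
    · rw [hT0 x z h0.symm (F x), hT0 x z h0.symm a]
  -- rearranged risks
  have hRZ_rw : ∀ g : 𝒵 → 𝒜, RZ g = ∑ x, ∑ z, ∑ y, p x y z * ℓ y (g z) :=
    fun g => Finset.sum_congr rfl fun x _ => Finset.sum_comm
  have hRXF_rw : RX F = ∑ x, ∑ z, ∑ y, p x y z * ℓ y (F x) :=
    Finset.sum_congr rfl fun x _ => Finset.sum_comm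
  have hRXF_min : ∀ f, RX F ≤ RX f := by
    intro f
    apply Finset.sum_le_sum
    intro x _
    calc (∑ y, ∑ z, p x y z * ℓ y (F x))
        = ∑ z, ∑ y, p x y z * ℓ y (F x) := Finset.sum_comm
      _ ≤ ∑ z, ∑ y, p x y z * ℓ y (f x) :=
          Finset.sum_le_sum fun z _ => hTle x z (f x)
      _ = ∑ y, ∑ z, p x y z * ℓ y (f x) := Finset.sum_comm
  have hRZ_ge : ∀ g, RX F ≤ RZ g := by
    intro g
    rw [hRXF_rw, hRZ_rw]
    exact Finset.sum_le_sum fun x _ => Finset.sum_le_sum fun z _ => hTle x z (g z)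
  have hRZ_strict : ∀ g x₀ z₀, 0 < (∑ y, p x₀ y z₀) → g z₀ ≠ F x₀ → RX F < RZ g := by
    intro g x₀ z₀ hpz hne
    rw [hRXF_rw, hRZ_rw]
    apply Finset.sum_lt_sum
    · intro x _; exact Finset.sum_le_sum fun z _ => hTle x z (g z)
    · refine ⟨x₀, Finset.mem_univ _, ?_⟩
      apply Finset.sum_lt_sum
      · intro z _; exact hTle x₀ z (g z)
      · exact ⟨z₀, Finset.mem_univ _, hTstrict x₀ z₀ hpz (g z₀) hne⟩
  have hRZ_agree : ∀ g, (∀ x z, 0 < (∑ y, p x y z) → g z = F x) → RZ g = RX F := by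
    intro g hag
    rw [hRXF_rw, hRZ_rw]
    apply Finset.sum_congr rfl
    intro x _
    apply Finset.sum_congr rfl
    intro z _
    rcases (Finset.sum_nonneg fun y _ => hp x y z).lt_or_eq with hpos | h0
    · rw [hag x z hpos]
    · rw [hT0 x z h0.symm (g z), hT0 x z h0.symm (F x)]
  -- infima
  have hbZ : BddBelow (Set.range RZ) := ⟨RX F, by rintro _ ⟨g, rfl⟩; exact hRZ_ge g⟩
  have hbX : BddBelow (Set.range RX) := ⟨RX F, by rintro _ ⟨f, rfl⟩; exact hRXF_min f⟩
  have hIX : (⨅ f, RX f) = RX F := le_antisymm (ciInf_le hbX F) (le_ciInf hRXF_min)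
  have hIZ_ge : RX F ≤ ⨅ g, RZ g := le_ciInf hRZ_ge
  constructor
  · intro h g hg x z hpz
    have h1 : RZ g = RX F := by
      have ha : RZ g ≤ ⨅ g', RZ g' := le_ciInf hg
      have hb : (⨅ g', RZ g') ≤ RZ g := ciInf_le hbZ g
      have : RZ g = ⨅ g', RZ g' := le_antisymm ha hb
      rw [this, h, hIX]
    by_contra hne
    exact absurd h1 (ne_of_gt (hRZ_strict g x z hpz hne))
  · intro h
    obtain ⟨g₀, hg₀⟩ := Finite.exists_min RZ
    have h1 : RZ g₀ = RX F := hRZ_agree g₀ (h g₀ hg₀)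
    have h2 : (⨅ g, RZ g) ≤ RX F := h1 ▸ ciInf_le hbZ g₀
    rw [hIX]
    exact le_antisymm h2 hIZ_ge
end

section
/- (Existence of optimal representations.) Let (D, X, Y) be jointly distributed discrete random variables, ℓ a loss admitting a unique Bayes predictor F* : 𝒳 → 𝒜 (strict optimality pointwise), and suppose: (i) generalized covariate shift: for every domain d and x ∈ supp(p(X|d)), F*(x) is the strictly optimal prediction for the conditional p(Y|x,d); (ii) constant Bayes image: the image F*(supp(p(X|d))) equals F*(𝒳) for all d; (iii) |𝒵| ≥ |F*(𝒳)|. Then there exists an encoder p(Z|X) such that supp(p(Z|d)) = supp(p(Z)) for all domains d, and the Bayes risks satisfy R(Y|Z) = R(Y|X). In particular, the construction Z = φ(F*(X)) for any injection φ : F*(𝒳) → 𝒵 works. -/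
/-- A finite sum of nonnegative reals is positive iff some term is positive. -/
lemma sum_pos_iff_exists_pos {ι : Type*} (s : Finset ι) (f : ι → ℝ)
    (h : ∀ i ∈ s, 0 ≤ f i) : (0 < ∑ i ∈ s, f i) ↔ ∃ i ∈ s, 0 < f i := by
  constructor
  · intro hs
    by_contra hc
    push_neg at hc
    have : ∑ i ∈ s, f i = 0 :=
      Finset.sum_eq_zero fun i hi => le_antisymm (hc i hi) (h i hi)
    simp [this] at hs
  · rintro ⟨i, hi, hfi⟩
    exact Finset.sum_pos' h ⟨i, hi, hfi⟩

/-- Existence of optimal representations: under generalized covariate shift,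
constant Bayes image, and `|𝒵| ≥ |F*(𝒳)|`, there is an encoder matching the
support of `Z` across all domains and achieving `R(Y|Z) = R(Y|X)`; concretely,
`Z = φ(F*(X))` for an injection `φ` of the Bayes image into `𝒵` works. -/
theorem exists_optimal_representation
    {𝒟 𝒳 𝒴 𝒵 𝒜 : Type*}
    [Fintype 𝒟] [Fintype 𝒳] [Fintype 𝒴] [Fintype 𝒵] [Fintype 𝒜]
    [Nonempty 𝒜] [DecidableEq 𝒜] [DecidableEq 𝒵]
    (pD : 𝒟 → ℝ) (hpD : ∀ d, 0 < pD d) (hpD1 : ∑ d, pD d = 1)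
    (pXY : 𝒟 → 𝒳 → 𝒴 → ℝ) (hpXY : ∀ d x y, 0 ≤ pXY d x y)
    (hpXY1 : ∀ d, ∑ x, ∑ y, pXY d x y = 1)
    (ℓ : 𝒴 → 𝒜 → ℝ)
    (F : 𝒳 → 𝒜)
    -- F is the unique (pointwise strictly optimal) Bayes predictor for the mixture
    (hF : ∀ x, 0 < (∑ d, pD d * ∑ y, pXY d x y) → ∀ a, a ≠ F x →
      (∑ d, pD d * ∑ y, pXY d x y * ℓ y (F x)) < ∑ d, pD d * ∑ y, pXY d x y * ℓ y a)
    -- (i) generalized covariate shift: F is strictly optimal in every domain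
    (hGCS : ∀ d x, 0 < (∑ y, pXY d x y) → ∀ a, a ≠ F x →
      (∑ y, pXY d x y * ℓ y (F x)) < ∑ y, pXY d x y * ℓ y a)
    -- (ii) constant Bayes image
    (hImg : ∀ d, F '' {x | 0 < ∑ y, pXY d x y} = Set.range F)
    -- (iii) |𝒵| ≥ |F*(𝒳)|
    (hcard : (Finset.univ.image F).card ≤ Fintype.card 𝒵) :
    ∃ φ : 𝒜 → 𝒵, Set.InjOn φ (Set.range F) ∧
      -- support match: supp p(Z|d) = supp p(Z) for all d
      ((∀ d : 𝒟,
          {z : 𝒵 | 0 < ∑ x, ∑ y, pXY d x y * (if φ (F x) = z then (1:ℝ) else 0)}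
            = {z : 𝒵 | 0 < ∑ d', ∑ x, ∑ y,
                pD d' * pXY d' x y * (if φ (F x) = z then (1:ℝ) else 0)})
        -- R(Y|Z) = R(Y|X)
        ∧ (⨅ g : 𝒵 → 𝒜, ∑ d, ∑ x, ∑ y, ∑ z,
              pD d * pXY d x y * (if φ (F x) = z then (1:ℝ) else 0) * ℓ y (g z))
            = ⨅ f : 𝒳 → 𝒜, ∑ d, ∑ x, ∑ y, pD d * pXY d x y * ℓ y (f x)) := by
  classical
  -- 𝒟, 𝒳 are nonempty
  have hD : Nonempty 𝒟 := by
    by_contra h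
    rw [not_nonempty_iff] at h
    simp [Finset.univ_eq_empty] at hpD1
  obtain ⟨d₀⟩ := hD
  have hX : Nonempty 𝒳 := by
    by_contra h
    rw [not_nonempty_iff] at h
    have := hpXY1 d₀
    simp [Finset.univ_eq_empty] at this
  obtain ⟨x₀⟩ := hX
  -- 𝒵 is nonempty
  have hZne : Nonempty 𝒵 := by
    have h1 : 0 < (Finset.univ.image F).card :=
      Finset.card_pos.mpr ⟨F x₀, Finset.mem_image_of_mem _ (Finset.mem_univ _)⟩
    exact Fintype.card_pos_iff.mp (lt_of_lt_of_le h1 hcard)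
  -- construct the injection
  set S : Finset 𝒜 := Finset.univ.image F with hS
  have hcard' : Fintype.card S ≤ Fintype.card 𝒵 := by
    rwa [Fintype.card_coe]
  obtain ⟨e⟩ : Nonempty (S ↪ 𝒵) := Function.Embedding.nonempty_iff_card_le.mpr hcard'
  let φ : 𝒜 → 𝒵 := fun a => if h : a ∈ S then e ⟨a, h⟩ else Classical.arbitrary 𝒵
  have hrangeS : ∀ a : 𝒜, a ∈ Set.range F → a ∈ S := by
    rintro a ⟨x, rfl⟩
    exact Finset.mem_image_of_mem _ (Finset.mem_univ _)
  have hφinj : Set.InjOn φ (Set.range F) := by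
    intro a ha b hb hab
    have ha' := hrangeS a ha
    have hb' := hrangeS b hb
    simp only [φ, dif_pos ha', dif_pos hb'] at hab
    simpa using e.injective hab
  refine ⟨φ, hφinj, ?_, ?_⟩
  · -- support match
    -- each conditional (and the marginal) support equals φ '' range F
    have key : ∀ d : 𝒟,
        {z : 𝒵 | 0 < ∑ x, ∑ y, pXY d x y * (if φ (F x) = z then (1:ℝ) else 0)}
          = φ '' (Set.range F) := by
      intro d
      ext z
      simp only [Set.mem_setOf_eq]
      rw [sum_pos_iff_exists_pos _ _ (fun x _ => Finset.sum_nonneg fun y _ => by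
        have := hpXY d x y; positivity)]
      constructor
      · rintro ⟨x, -, hx⟩
        refine ⟨F x, ⟨x, rfl⟩, ?_⟩
        by_contra hne
        simp [hne] at hx
      · rintro ⟨a, haF, rfl⟩
        have : a ∈ F '' {x | 0 < ∑ y, pXY d x y} := (hImg d) ▸ haF
        obtain ⟨x, hx, rfl⟩ := this
        refine ⟨x, Finset.mem_univ x, ?_⟩
        simpa using hx
    have keym :
        {z : 𝒵 | 0 < ∑ d', ∑ x, ∑ y,
            pD d' * pXY d' x y * (if φ (F x) = z then (1:ℝ) else 0)}
          = φ '' (Set.range F) := by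
      ext z
      simp only [Set.mem_setOf_eq]
      rw [sum_pos_iff_exists_pos _ _ (fun d' _ => Finset.sum_nonneg fun x _ =>
        Finset.sum_nonneg fun y _ => by
          have h1 := (hpD d').le; have h2 := hpXY d' x y; positivity)]
      constructor
      · rintro ⟨d', -, hd'⟩
        have : z ∈ {z : 𝒵 | 0 < ∑ x, ∑ y, pXY d' x y * (if φ (F x) = z then (1:ℝ) else 0)} := by
          simp only [Set.mem_setOf_eq]
          have hrw : ∀ x, ∑ y, pD d' * pXY d' x y * (if φ (F x) = z then (1:ℝ) else 0)
              = pD d' * ∑ y, pXY d' x y * (if φ (F x) = z then (1:ℝ) else 0) := by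
            intro x; rw [Finset.mul_sum]; exact Finset.sum_congr rfl fun y _ => by ring
          rw [Finset.sum_congr rfl (fun x _ => hrw x), ← Finset.mul_sum] at hd'
          rcases mul_pos_iff.mp hd' with ⟨-, h⟩ | ⟨h, -⟩
          · exact h
          · exact absurd (hpD d') (not_lt.mpr h.le)
        exact (key d') ▸ this
      · intro hz
        have hz' : z ∈ {z : 𝒵 | 0 < ∑ x, ∑ y,
            pXY d₀ x y * (if φ (F x) = z then (1:ℝ) else 0)} := (key d₀) ▸ hz
        simp only [Set.mem_setOf_eq] at hz'
        refine ⟨d₀, Finset.mem_univ d₀, ?_⟩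
        have hrw : ∀ x, ∑ y, pD d₀ * pXY d₀ x y * (if φ (F x) = z then (1:ℝ) else 0)
            = pD d₀ * ∑ y, pXY d₀ x y * (if φ (F x) = z then (1:ℝ) else 0) := by
          intro x; rw [Finset.mul_sum]; exact Finset.sum_congr rfl fun y _ => by ring
        rw [Finset.sum_congr rfl (fun x _ => hrw x), ← Finset.mul_sum]
        exact mul_pos (hpD d₀) hz'
    intro d
    rw [key d, keym]
  · -- risk equality
    set Rx : (𝒳 → 𝒜) → ℝ := fun f => ∑ d, ∑ x, ∑ y, pD d * pXY d x y * ℓ y (f x) with hRxdef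
    set Rz : (𝒵 → 𝒜) → ℝ := fun g => ∑ d, ∑ x, ∑ y, ∑ z,
        pD d * pXY d x y * (if φ (F x) = z then (1:ℝ) else 0) * ℓ y (g z) with hRzdef
    have hRz : ∀ g : 𝒵 → 𝒜, Rz g = Rx (fun x => g (φ (F x))) := by
      intro g
      refine Finset.sum_congr rfl fun d _ => Finset.sum_congr rfl fun x _ =>
        Finset.sum_congr rfl fun y _ => ?_
      simp [mul_ite, ite_mul]
    have hRx_rw : ∀ f : 𝒳 → 𝒜, Rx f = ∑ x, ∑ d, pD d * ∑ y, pXY d x y * ℓ y (f x) := by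
      intro f
      rw [hRxdef]
      rw [Finset.sum_comm]
      refine Finset.sum_congr rfl fun x _ => Finset.sum_congr rfl fun d _ => ?_
      rw [Finset.mul_sum]
      exact Finset.sum_congr rfl fun y _ => by ring
    have hFbest : ∀ f : 𝒳 → 𝒜, Rx F ≤ Rx f := by
      intro f
      rw [hRx_rw, hRx_rw]
      refine Finset.sum_le_sum fun x _ => ?_
      by_cases hfx : f x = F x
      · rw [hfx]
      · by_cases hw : 0 < ∑ d, pD d * ∑ y, pXY d x y
        · exact (hF x hw (f x) hfx).le
        · have hnn : ∀ d' ∈ Finset.univ, (0:ℝ) ≤ pD d' * ∑ y, pXY d' x y := fun d' _ =>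
            mul_nonneg (hpD d').le (Finset.sum_nonneg fun y _ => hpXY d' x y)
          have hsum0 : ∑ d', pD d' * ∑ y, pXY d' x y = 0 :=
            le_antisymm (not_lt.mp hw) (Finset.sum_nonneg hnn)
          have hw0 : ∀ d, ∑ y, pXY d x y = 0 := by
            intro d
            have h1 := (Finset.sum_eq_zero_iff_of_nonneg hnn).mp hsum0 d (Finset.mem_univ d)
            rcases mul_eq_zero.mp h1 with h2 | h2
            · exact absurd h2 (hpD d).ne'
            · exact h2
          have h0 : ∀ d y, pXY d x y = 0 := fun d y =>
            (Finset.sum_eq_zero_iff_of_nonneg (fun y _ => hpXY d x y)).mp (hw0 d) y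
              (Finset.mem_univ y)
          have hzero : ∀ a : 𝒜, ∑ d, pD d * ∑ y, pXY d x y * ℓ y a = 0 := by
            intro a
            refine Finset.sum_eq_zero fun d _ => ?_
            rw [Finset.sum_eq_zero fun y _ => by rw [h0 d y, zero_mul], mul_zero]
          rw [hzero, hzero]
    let g₀ : 𝒵 → 𝒜 := fun z =>
      if h : ∃ x, φ (F x) = z then F h.choose else Classical.arbitrary 𝒜
    have hg₀ : ∀ x, g₀ (φ (F x)) = F x := by
      intro x
      have h : ∃ x', φ (F x') = φ (F x) := ⟨x, rfl⟩
      simp only [g₀, dif_pos h]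
      exact hφinj ⟨h.choose, rfl⟩ ⟨x, rfl⟩ h.choose_spec
    have hcomp : (fun x => g₀ (φ (F x))) = F := funext hg₀
    have hbddZ : BddBelow (Set.range Rz) := (Set.finite_range Rz).bddBelow
    have hbddX : BddBelow (Set.range Rx) := (Set.finite_range Rx).bddBelow
    have hinfX : (⨅ f : 𝒳 → 𝒜, Rx f) = Rx F :=
      le_antisymm (ciInf_le hbddX F) (le_ciInf hFbest)
    show (⨅ g : 𝒵 → 𝒜, Rz g) = ⨅ f : 𝒳 → 𝒜, Rx f
    apply le_antisymm
    · refine (ciInf_le hbddZ g₀).trans ?_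
      rw [hRz g₀, hcomp, hinfX]
    · refine le_ciInf fun g => ?_
      rw [hinfX, hRz g]
      exact hFbest _
end

section
/- (Agreement of domain risk minimizers.) Let (D, X, Y, Z) be distributed as p(D)p(X,Y|D)p(Z|X) on finite spaces, with a loss admitting a unique pointwise-strictly-optimal Bayes predictor F* from X, and suppose generalized covariate shift holds (F*(x) is strictly optimal for p(Y|x,d) for every (x,d) in the support). If the encoder satisfies R(Y|Z) = R(Y|X), then: (a) there is a unique function g* on supp(p(Z)) that is strictly optimal pointwise, i.e. for all z ∈ supp(p(Z)) there is a* with E_{Y|z}[ℓ(Y, a*)] < E_{Y|z}[ℓ(Y, a)] for all a ≠ a*; and (b) for every domain d and every z ∈ supp(p(Z|d)), g*(z) is also strictly optimal for the domain conditional p(Y|z,d); hence any domain-d risk minimizer from Z agrees with g* on supp(p(Z|d)). -/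
private lemma pos_pos_of_mul_pos' {u v : ℝ} (hu : 0 ≤ u) (hv : 0 ≤ v) (h : 0 < u * v) :
    0 < u ∧ 0 < v := by
  constructor
  · rcases hu.lt_or_eq with h' | h'
    · exact h'
    · exfalso; rw [← h', zero_mul] at h; exact lt_irrefl 0 h
  · rcases hv.lt_or_eq with h' | h'
    · exact h'
    · exfalso; rw [← h', mul_zero] at h; exact lt_irrefl 0 h

private lemma sum3_rot {α β γ M : Type*} [AddCommMonoid M] [Fintype α] [Fintype β] [Fintype γ]
    (f : α → β → γ → M) :
    ∑ a, ∑ b, ∑ c, f a b c = ∑ c, ∑ a, ∑ b, f a b c := by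
  calc ∑ a, ∑ b, ∑ c, f a b c = ∑ a, ∑ c, ∑ b, f a b c :=
        Finset.sum_congr rfl fun a _ => Finset.sum_comm
    _ = ∑ c, ∑ a, ∑ b, f a b c := Finset.sum_comm

private lemma sum4_rot {α β γ δ M : Type*} [AddCommMonoid M]
    [Fintype α] [Fintype β] [Fintype γ] [Fintype δ]
    (f : α → β → γ → δ → M) :
    ∑ a, ∑ b, ∑ c, ∑ d, f a b c d = ∑ d, ∑ a, ∑ b, ∑ c, f a b c d := by
  calc ∑ a, ∑ b, ∑ c, ∑ d, f a b c d = ∑ a, ∑ d, ∑ b, ∑ c, f a b c d :=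
        Finset.sum_congr rfl fun a _ => sum3_rot _
    _ = ∑ d, ∑ a, ∑ b, ∑ c, f a b c d := Finset.sum_comm

/-- Agreement of domain risk minimizers: if the encoder `e` achieves
`R(Y|Z) = R(Y|X)` under generalized covariate shift, then (a) there is a (unique)
pointwise strictly optimal predictor `g` on `supp p(Z)`, (b) `g z` is also strictly
optimal for every domain conditional `p(Y|z,d)` on `supp p(Z|d)`, hence (c) any
domain-`d` risk minimizer from `Z` agrees with `g` on `supp p(Z|d)`. -/
theorem agreement_of_domain_risk_minimizers
    {𝒟 𝒳 𝒴 𝒵 𝒜 : Type*}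
    [Fintype 𝒟] [Fintype 𝒳] [Fintype 𝒴] [Fintype 𝒵] [Fintype 𝒜] [Nonempty 𝒜]
    (pD : 𝒟 → ℝ) (hpD : ∀ d, 0 < pD d) (hpD1 : ∑ d, pD d = 1)
    (pXY : 𝒟 → 𝒳 → 𝒴 → ℝ) (hpXY : ∀ d x y, 0 ≤ pXY d x y)
    (hpXY1 : ∀ d, ∑ x, ∑ y, pXY d x y = 1)
    (ℓ : 𝒴 → 𝒜 → ℝ)
    (F : 𝒳 → 𝒜)
    -- unique pointwise strictly optimal Bayes predictor from X (mixture)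
    (hF : ∀ x, 0 < (∑ d, pD d * ∑ y, pXY d x y) → ∀ a, a ≠ F x →
      (∑ d, pD d * ∑ y, pXY d x y * ℓ y (F x)) < ∑ d, pD d * ∑ y, pXY d x y * ℓ y a)
    -- generalized covariate shift
    (hGCS : ∀ d x, 0 < (∑ y, pXY d x y) → ∀ a, a ≠ F x →
      (∑ y, pXY d x y * ℓ y (F x)) < ∑ y, pXY d x y * ℓ y a)
    -- the encoder
    (e : 𝒳 → 𝒵 → ℝ) (he : ∀ x z, 0 ≤ e x z) (he1 : ∀ x, ∑ z, e x z = 1)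
    -- R(Y|Z) = R(Y|X)
    (hRZ : (⨅ g : 𝒵 → 𝒜, ∑ d, ∑ x, ∑ y, ∑ z, pD d * pXY d x y * e x z * ℓ y (g z))
        = ⨅ f : 𝒳 → 𝒜, ∑ d, ∑ x, ∑ y, pD d * pXY d x y * ℓ y (f x)) :
    ∃ g : 𝒵 → 𝒜,
      -- (a) pointwise strict optimality on supp p(Z)
      (∀ z, 0 < (∑ d, ∑ x, ∑ y, pD d * pXY d x y * e x z) → ∀ a, a ≠ g z →
        (∑ d, ∑ x, ∑ y, pD d * pXY d x y * e x z * ℓ y (g z))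
          < ∑ d, ∑ x, ∑ y, pD d * pXY d x y * e x z * ℓ y a)
      -- (b) strict optimality for the domain conditional on supp p(Z|d)
      ∧ (∀ d z, 0 < (∑ x, ∑ y, pXY d x y * e x z) → ∀ a, a ≠ g z →
          (∑ x, ∑ y, pXY d x y * e x z * ℓ y (g z))
            < ∑ x, ∑ y, pXY d x y * e x z * ℓ y a)
      -- (c) every domain-d risk minimizer agrees with g on supp p(Z|d)
      ∧ (∀ d, ∀ h : 𝒵 → 𝒜,
          (∀ h' : 𝒵 → 𝒜, (∑ x, ∑ y, ∑ z, pXY d x y * e x z * ℓ y (h z))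
              ≤ ∑ x, ∑ y, ∑ z, pXY d x y * e x z * ℓ y (h' z)) →
          ∀ z, 0 < (∑ x, ∑ y, pXY d x y * e x z) → h z = g z) := by
  classical
  -- nonnegativity basics
  have hq0 : ∀ d x, (0:ℝ) ≤ ∑ y, pXY d x y := fun d x => Finset.sum_nonneg fun y _ => hpXY d x y
  have hpx0 : ∀ x, (0:ℝ) ≤ ∑ d, pD d * ∑ y, pXY d x y :=
    fun x => Finset.sum_nonneg fun d _ => mul_nonneg (hpD d).le (hq0 d x)
  -- degenerate x
  have hdeg : ∀ x, ¬ (0 < ∑ d, pD d * ∑ y, pXY d x y) → ∀ d y, pXY d x y = 0 := by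
    intro x hx d y
    have h0 : ∑ d, pD d * ∑ y, pXY d x y = 0 := le_antisymm (not_lt.1 hx) (hpx0 x)
    have h1 : pD d * ∑ y, pXY d x y = 0 :=
      (Finset.sum_eq_zero_iff_of_nonneg
        (fun d _ => mul_nonneg (hpD d).le (hq0 d x))).1 h0 d (Finset.mem_univ d)
    have h2 : ∑ y, pXY d x y = 0 := by
      rcases mul_eq_zero.1 h1 with h | h
      · exact absurd h (hpD d).ne'
      · exact h
    exact (Finset.sum_eq_zero_iff_of_nonneg (fun y _ => hpXY d x y)).1 h2 y (Finset.mem_univ y)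
  -- degenerate (d,x) for domain conditional
  have hdegq : ∀ d x, ¬ (0 < ∑ y, pXY d x y) → ∀ y, pXY d x y = 0 := by
    intro d x hx y
    have h2 : ∑ y, pXY d x y = 0 := le_antisymm (not_lt.1 hx) (hq0 d x)
    exact (Finset.sum_eq_zero_iff_of_nonneg (fun y _ => hpXY d x y)).1 h2 y (Finset.mem_univ y)
  -- pointwise Bayes optimality (weak form)
  have hBle : ∀ x a, (∑ d, pD d * ∑ y, pXY d x y * ℓ y (F x))
      ≤ ∑ d, pD d * ∑ y, pXY d x y * ℓ y a := by
    intro x a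
    by_cases hax : a = F x
    · rw [hax]
    by_cases hx : 0 < ∑ d, pD d * ∑ y, pXY d x y
    · exact (hF x hx a hax).le
    · simp [hdeg x hx]
  have hCle : ∀ d x a, (∑ y, pXY d x y * ℓ y (F x)) ≤ ∑ y, pXY d x y * ℓ y a := by
    intro d x a
    by_cases hax : a = F x
    · rw [hax]
    by_cases hx : 0 < ∑ y, pXY d x y
    · exact (hGCS d x hx a hax).le
    · simp [hdegq d x hx]
  -- rearrangement: full Z-risk
  have hRZrw : ∀ g : 𝒵 → 𝒜, (∑ d, ∑ x, ∑ y, ∑ z, pD d * pXY d x y * e x z * ℓ y (g z))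
      = ∑ z, ∑ x, e x z * ∑ d, pD d * ∑ y, pXY d x y * ℓ y (g z) := by
    intro g
    rw [sum4_rot]
    refine Finset.sum_congr rfl fun z _ => ?_
    rw [Finset.sum_comm]
    refine Finset.sum_congr rfl fun x _ => ?_
    simp only [Finset.mul_sum]
    exact Finset.sum_congr rfl fun d _ => Finset.sum_congr rfl fun y _ => by ring
  -- rearrangement: full X-risk
  have hRXrw : ∀ f : 𝒳 → 𝒜, (∑ d, ∑ x, ∑ y, pD d * pXY d x y * ℓ y (f x))
      = ∑ x, ∑ d, pD d * ∑ y, pXY d x y * ℓ y (f x) := by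
    intro f
    rw [Finset.sum_comm]
    refine Finset.sum_congr rfl fun x _ => ?_
    simp only [Finset.mul_sum]
    exact Finset.sum_congr rfl fun d _ => Finset.sum_congr rfl fun y _ => by ring
  -- rearrangement: p(Z=z)
  have hPZrw : ∀ z, (∑ d, ∑ x, ∑ y, pD d * pXY d x y * e x z)
      = ∑ x, e x z * ∑ d, pD d * ∑ y, pXY d x y := by
    intro z
    rw [Finset.sum_comm]
    refine Finset.sum_congr rfl fun x _ => ?_
    simp only [Finset.mul_sum]
    exact Finset.sum_congr rfl fun d _ => Finset.sum_congr rfl fun y _ => by ring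
  -- rearrangement: z-conditional mixture risk of action a
  have hArw : ∀ z a, (∑ d, ∑ x, ∑ y, pD d * pXY d x y * e x z * ℓ y a)
      = ∑ x, e x z * ∑ d, pD d * ∑ y, pXY d x y * ℓ y a := by
    intro z a
    rw [Finset.sum_comm]
    refine Finset.sum_congr rfl fun x _ => ?_
    simp only [Finset.mul_sum]
    exact Finset.sum_congr rfl fun d _ => Finset.sum_congr rfl fun y _ => by ring
  -- rearrangement: domain-conditional quantities
  have hQrw : ∀ d z, (∑ x, ∑ y, pXY d x y * e x z) = ∑ x, e x z * ∑ y, pXY d x y := by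
    intro d z
    refine Finset.sum_congr rfl fun x _ => ?_
    simp only [Finset.mul_sum]
    exact Finset.sum_congr rfl fun y _ => by ring
  have hCrw : ∀ d z a, (∑ x, ∑ y, pXY d x y * e x z * ℓ y a)
      = ∑ x, e x z * ∑ y, pXY d x y * ℓ y a := by
    intro d z a
    refine Finset.sum_congr rfl fun x _ => ?_
    simp only [Finset.mul_sum]
    exact Finset.sum_congr rfl fun y _ => by ring
  have hDRrw : ∀ (d : 𝒟) (h : 𝒵 → 𝒜), (∑ x, ∑ y, ∑ z, pXY d x y * e x z * ℓ y (h z))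
      = ∑ z, ∑ x, e x z * ∑ y, pXY d x y * ℓ y (h z) := by
    intro d h
    rw [sum3_rot]
    refine Finset.sum_congr rfl fun z _ => Finset.sum_congr rfl fun x _ => ?_
    simp only [Finset.mul_sum]
    exact Finset.sum_congr rfl fun y _ => by ring
  -- choose a global minimizer g of the Z-risk
  obtain ⟨g, hgmin⟩ := Finite.exists_min
    (fun g : 𝒵 → 𝒜 => ∑ d, ∑ x, ∑ y, ∑ z, pD d * pXY d x y * e x z * ℓ y (g z))
  -- the infima are attained
  have hinfZ : (⨅ g' : 𝒵 → 𝒜, ∑ d, ∑ x, ∑ y, ∑ z, pD d * pXY d x y * e x z * ℓ y (g' z))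
      = ∑ d, ∑ x, ∑ y, ∑ z, pD d * pXY d x y * e x z * ℓ y (g z) := by
    apply le_antisymm
    · exact ciInf_le (Set.finite_range _).bddBelow g
    · exact le_ciInf hgmin
  have hFmin : ∀ f : 𝒳 → 𝒜, (∑ d, ∑ x, ∑ y, pD d * pXY d x y * ℓ y (F x))
      ≤ ∑ d, ∑ x, ∑ y, pD d * pXY d x y * ℓ y (f x) := by
    intro f
    rw [hRXrw F, hRXrw f]
    exact Finset.sum_le_sum fun x _ => hBle x (f x)
  have hinfX : (⨅ f : 𝒳 → 𝒜, ∑ d, ∑ x, ∑ y, pD d * pXY d x y * ℓ y (f x))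
      = ∑ d, ∑ x, ∑ y, pD d * pXY d x y * ℓ y (F x) := by
    apply le_antisymm
    · exact ciInf_le (Set.finite_range _).bddBelow F
    · exact le_ciInf hFmin
  have heq : (∑ d, ∑ x, ∑ y, ∑ z, pD d * pXY d x y * e x z * ℓ y (g z))
      = ∑ d, ∑ x, ∑ y, pD d * pXY d x y * ℓ y (F x) := by
    rw [← hinfZ, hRZ, hinfX]
  -- key: g agrees with F on the support
  have hstar : ∀ x z, 0 < (∑ d, pD d * ∑ y, pXY d x y) → 0 < e x z → g z = F x := by
    intro x0 z0 hx he0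
    by_contra hne
    have hlt : (∑ z, ∑ x, e x z * ∑ d, pD d * ∑ y, pXY d x y * ℓ y (F x))
        < ∑ z, ∑ x, e x z * ∑ d, pD d * ∑ y, pXY d x y * ℓ y (g z) := by
      apply Finset.sum_lt_sum
      · intro z _
        exact Finset.sum_le_sum fun x _ => mul_le_mul_of_nonneg_left (hBle x (g z)) (he x z)
      · refine ⟨z0, Finset.mem_univ z0, ?_⟩
        apply Finset.sum_lt_sum
        · intro x _
          exact mul_le_mul_of_nonneg_left (hBle x (g z0)) (he x z0)
        · exact ⟨x0, Finset.mem_univ x0, mul_lt_mul_of_pos_left (hF x0 hx (g z0) hne) he0⟩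
    have hL : (∑ z, ∑ x, e x z * ∑ d, pD d * ∑ y, pXY d x y * ℓ y (F x))
        = ∑ x, ∑ d, pD d * ∑ y, pXY d x y * ℓ y (F x) := by
      rw [Finset.sum_comm]
      refine Finset.sum_congr rfl fun x _ => ?_
      rw [← Finset.sum_mul, he1 x, one_mul]
    rw [hL, ← hRZrw g, heq, hRXrw F] at hlt
    exact lt_irrefl _ hlt
  -- nice form of (a)
  have hamain : ∀ z, 0 < (∑ x, e x z * ∑ d, pD d * ∑ y, pXY d x y) → ∀ a, a ≠ g z →
      (∑ x, e x z * ∑ d, pD d * ∑ y, pXY d x y * ℓ y (g z))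
        < ∑ x, e x z * ∑ d, pD d * ∑ y, pXY d x y * ℓ y a := by
    intro z hz a ha
    have hex : ∃ x, 0 < e x z * ∑ d, pD d * ∑ y, pXY d x y := by
      by_contra hcon
      push_neg at hcon
      have : (∑ x, e x z * ∑ d, pD d * ∑ y, pXY d x y) ≤ 0 :=
        Finset.sum_nonpos fun x _ => hcon x
      linarith
    obtain ⟨x0, hx0⟩ := hex
    obtain ⟨he0, hpx⟩ := pos_pos_of_mul_pos' (he x0 z) (hpx0 x0) hx0
    apply Finset.sum_lt_sum
    · intro x _
      by_cases hx : 0 < ∑ d, pD d * ∑ y, pXY d x y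
      · by_cases hez : 0 < e x z
        · rw [hstar x z hx hez]
          exact mul_le_mul_of_nonneg_left (hBle x a) (he x z)
        · have h0 : e x z = 0 := le_antisymm (not_lt.1 hez) (he x z)
          simp [h0]
      · simp [hdeg x hx]
    · refine ⟨x0, Finset.mem_univ x0, ?_⟩
      have hgF : g z = F x0 := hstar x0 z hpx he0
      have haF : a ≠ F x0 := by rw [← hgF]; exact ha
      rw [hgF]
      exact mul_lt_mul_of_pos_left (hF x0 hpx a haF) he0
  -- nice form of (b)
  have hbmain : ∀ d z, 0 < (∑ x, e x z * ∑ y, pXY d x y) → ∀ a, a ≠ g z →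
      (∑ x, e x z * ∑ y, pXY d x y * ℓ y (g z))
        < ∑ x, e x z * ∑ y, pXY d x y * ℓ y a := by
    intro d z hz a ha
    have hex : ∃ x, 0 < e x z * ∑ y, pXY d x y := by
      by_contra hcon
      push_neg at hcon
      have : (∑ x, e x z * ∑ y, pXY d x y) ≤ 0 := Finset.sum_nonpos fun x _ => hcon x
      linarith
    obtain ⟨x0, hx0⟩ := hex
    obtain ⟨he0, hqx⟩ := pos_pos_of_mul_pos' (he x0 z) (hq0 d x0) hx0
    have hpx : 0 < ∑ d', pD d' * ∑ y, pXY d' x0 y :=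
      lt_of_lt_of_le (mul_pos (hpD d) hqx)
        (Finset.single_le_sum (fun d' _ => mul_nonneg (hpD d').le (hq0 d' x0))
          (Finset.mem_univ d))
    apply Finset.sum_lt_sum
    · intro x _
      by_cases hqx' : 0 < ∑ y, pXY d x y
      · by_cases hez : 0 < e x z
        · have hpx' : 0 < ∑ d', pD d' * ∑ y, pXY d' x y :=
            lt_of_lt_of_le (mul_pos (hpD d) hqx')
              (Finset.single_le_sum (fun d' _ => mul_nonneg (hpD d').le (hq0 d' x))
                (Finset.mem_univ d))
          rw [hstar x z hpx' hez]
          exact mul_le_mul_of_nonneg_left (hCle d x a) (he x z)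
        · have h0 : e x z = 0 := le_antisymm (not_lt.1 hez) (he x z)
          simp [h0]
      · simp [hdegq d x hqx']
    · refine ⟨x0, Finset.mem_univ x0, ?_⟩
      have hgF : g z = F x0 := hstar x0 z hpx he0
      have haF : a ≠ F x0 := by rw [← hgF]; exact ha
      rw [hgF]
      exact mul_lt_mul_of_pos_left (hGCS d x0 hqx a haF) he0
  refine ⟨g, ?_, ?_, ?_⟩
  · -- (a)
    intro z hz a ha
    rw [hPZrw z] at hz
    rw [hArw z (g z), hArw z a]
    exact hamain z hz a ha
  · -- (b)
    intro d z hz a ha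
    rw [hQrw d z] at hz
    rw [hCrw d z (g z), hCrw d z a]
    exact hbmain d z hz a ha
  · -- (c)
    intro d h hmin z hz
    by_contra hne
    rw [hQrw d z] at hz
    have hmin' := hmin (Function.update h z (g z))
    rw [hDRrw d h, hDRrw d (Function.update h z (g z))] at hmin'
    have hlt : (∑ z', ∑ x, e x z' * ∑ y, pXY d x y * ℓ y (Function.update h z (g z) z'))
        < ∑ z', ∑ x, e x z' * ∑ y, pXY d x y * ℓ y (h z') := by
      apply Finset.sum_lt_sum
      · intro z' _
        by_cases hzz : z' = z
        · subst hzz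
          rw [Function.update_self]
          exact (hbmain d z' hz (h z') hne).le
        · rw [Function.update_of_ne hzz]
      · refine ⟨z, Finset.mem_univ z, ?_⟩
        rw [Function.update_self]
        exact hbmain d z hz (h z) hne
    exact absurd hmin' (not_le.2 hlt)
end

section
/- (No free lunch for IDG, 0-1 loss.) Let ℓ be the 0-1 loss with action space 𝒜 = 𝒴 finite, let p(X,Y|ds) be a source distribution with a unique constant optimal prediction a_C = argmin_{y} E_{p(Y|ds)}[ℓ(Y, y)] and with |𝒳 ∖ supp(p(X|ds))| > 1, and let p(Z|X) be any encoder with deterministic or stochastic output. Suppose there exists a target domain dt_g with nonempty support contained in 𝒳 ∖ supp(p(X|ds)), whose Bayes image equals 𝒴, and on which the encoder strictly outperforms the constant representation in worst-case risk: sup_{f ∈ argmin source risk from Z} R^{dt_g}(f) < sup_{f ∈ argmin source risk from constant C} R^{dt_g}(f). Then there exist infinitely many valid target domains dt_b (with constant Bayes image equal to the source's) such that sup_{f ∈ argmin source risk from Z} R^{dt_b}(f) > sup_{f ∈ argmin source risk from C} R^{dt_b}(f), i.e. the encoder is strictly worse than the constant representation on dt_b. -/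
set_option maxHeartbeats 1000000


/-- No free lunch for IDG (0-1 loss): if an encoder, chosen on a source domain
whose optimal constant prediction `aC` is unique and whose support leaves out more
than one input, strictly outperforms the constant representation (at `z0`) in
worst-case risk on some valid target `ptg` supported outside the source, then there
are infinitely many valid target domains (same Bayes image as the source) on which
the encoder is strictly worse than the constant representation. -/
theorem no_free_lunch_for_idg
    {𝒳 𝒴 𝒵 : Type*} [Fintype 𝒳] [Fintype 𝒴] [Fintype 𝒵] [Nonempty 𝒴]
    (ℓ : 𝒴 → 𝒴 → ℝ) [DecidableEq 𝒴]
    (hℓ : ∀ y a, ℓ y a = if y = a then 0 else 1)  -- 0-1 loss, 𝒜 = 𝒴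
    -- source domain p(X, Y | ds)
    (ps : 𝒳 → 𝒴 → ℝ) (hps : ∀ x y, 0 ≤ ps x y) (hps1 : ∑ x, ∑ y, ps x y = 1)
    -- unique constant optimal prediction on the source
    (aC : 𝒴) (haC : ∀ a, a ≠ aC →
      (∑ x, ∑ y, ps x y * ℓ y aC) < ∑ x, ∑ y, ps x y * ℓ y a)
    -- more than one input outside the source support
    (hout : 1 < Set.ncard {x : 𝒳 | ∑ y, ps x y = 0})
    -- the encoder chosen on the source
    (e : 𝒳 → 𝒵 → ℝ) (he : ∀ x z, 0 ≤ e x z) (he1 : ∀ x, ∑ z, e x z = 1)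
    -- source Bayes predictor (pointwise strictly optimal on the source support)
    (Fs : 𝒳 → 𝒴) (hFs : ∀ x, 0 < (∑ y, ps x y) → ∀ a, a ≠ Fs x →
      (∑ y, ps x y * ℓ y (Fs x)) < ∑ y, ps x y * ℓ y a)
    -- the constant representation is the point z0
    (z0 : 𝒵)
    -- the "good" target domain ptg
    (ptg : 𝒳 → 𝒴 → ℝ) (hptg : ∀ x y, 0 ≤ ptg x y) (hptg1 : ∑ x, ∑ y, ptg x y = 1)
    -- nontrivial support, contained outside the source support
    (hsupp_ne : {x : 𝒳 | 0 < ∑ y, ptg x y}.Nonempty)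
    (hsupp_out : {x : 𝒳 | 0 < ∑ y, ptg x y} ⊆ {x : 𝒳 | ∑ y, ps x y = 0})
    -- ptg satisfies Bayes image invariance with image all of 𝒴
    (Fg : 𝒳 → 𝒴) (hFg : ∀ x, 0 < (∑ y, ptg x y) → ∀ a, a ≠ Fg x →
      (∑ y, ptg x y * ℓ y (Fg x)) < ∑ y, ptg x y * ℓ y a)
    (hFgimg : Fg '' {x : 𝒳 | 0 < ∑ y, ptg x y} = Set.univ)
    -- the source encoder is useful: strictly beats the constant representation on ptg
    (hgood :
      sSup {r : ℝ | ∃ f : 𝒵 → 𝒴,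
          (∀ g : 𝒵 → 𝒴, (∑ x, ∑ y, ∑ z, ps x y * e x z * ℓ y (f z))
              ≤ ∑ x, ∑ y, ∑ z, ps x y * e x z * ℓ y (g z))
          ∧ r = ∑ x, ∑ y, ∑ z, ptg x y * e x z * ℓ y (f z)}
        < sSup {r : ℝ | ∃ f : 𝒵 → 𝒴,
            (∀ g : 𝒵 → 𝒴, (∑ x, ∑ y, ps x y * ℓ y (f z0))
                ≤ ∑ x, ∑ y, ps x y * ℓ y (g z0))
            ∧ r = ∑ x, ∑ y, ptg x y * ℓ y (f z0)}) :
    -- infinitely many bad valid target domains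
    {pt : 𝒳 → 𝒴 → ℝ |
      (∀ x y, 0 ≤ pt x y) ∧ (∑ x, ∑ y, pt x y = 1) ∧
      -- validity: constant Bayes image equal to the source's
      (∃ Fb : 𝒳 → 𝒴,
        (∀ x, 0 < (∑ y, pt x y) → ∀ a, a ≠ Fb x →
          (∑ y, pt x y * ℓ y (Fb x)) < ∑ y, pt x y * ℓ y a) ∧
        Fb '' {x : 𝒳 | 0 < ∑ y, pt x y} = Fs '' {x : 𝒳 | 0 < ∑ y, ps x y}) ∧
      -- the encoder is strictly worse than the constant representation on pt
      sSup {r : ℝ | ∃ f : 𝒵 → 𝒴,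
          (∀ g : 𝒵 → 𝒴, (∑ x, ∑ y, ps x y * ℓ y (f z0))
              ≤ ∑ x, ∑ y, ps x y * ℓ y (g z0))
          ∧ r = ∑ x, ∑ y, pt x y * ℓ y (f z0)}
        < sSup {r : ℝ | ∃ f : 𝒵 → 𝒴,
            (∀ g : 𝒵 → 𝒴, (∑ x, ∑ y, ∑ z, ps x y * e x z * ℓ y (f z))
                ≤ ∑ x, ∑ y, ∑ z, ps x y * e x z * ℓ y (g z))
            ∧ r = ∑ x, ∑ y, ∑ z, pt x y * e x z * ℓ y (f z)}}.Infinite := by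
  classical
  -- row sum of 0-1 loss
  have hrow : ∀ (w : 𝒴 → ℝ) (a : 𝒴), ∑ y, w y * ℓ y a = (∑ y, w y) - w a := by
    intro w a
    have h1 : ∀ y, w y * ℓ y a = w y - (if y = a then w y else 0) := by
      intro y; rw [hℓ]; split_ifs <;> ring
    rw [Finset.sum_congr rfl fun y _ => h1 y, Finset.sum_sub_distrib,
      Finset.sum_ite_eq' Finset.univ a w]
    simp
  -- reorder triple sums
  have hswap : ∀ (p : 𝒳 → 𝒴 → ℝ) (f : 𝒵 → 𝒴),
      (∑ x, ∑ y, ∑ z, p x y * e x z * ℓ y (f z))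
        = ∑ z, ∑ x, ∑ y, p x y * e x z * ℓ y (f z) := by
    intro p f
    rw [show (∑ x, ∑ y, ∑ z, p x y * e x z * ℓ y (f z))
        = ∑ x, ∑ z, ∑ y, p x y * e x z * ℓ y (f z) from
      Finset.sum_congr rfl fun x _ => Finset.sum_comm]
    exact Finset.sum_comm
  -- the source risk of the constant-aC predictor through the encoder
  have hRsconst : (∑ x, ∑ y, ∑ z, ps x y * e x z * ℓ y ((fun _ => aC) z))
      = ∑ x, ∑ y, ps x y * ℓ y aC := by
    refine Finset.sum_congr rfl fun x _ => Finset.sum_congr rfl fun y _ => ?_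
    rw [show (∑ z, ps x y * e x z * ℓ y ((fun _ => aC) z))
        = ∑ z, (ps x y * ℓ y aC) * e x z from Finset.sum_congr rfl fun z _ => by ring,
      ← Finset.mul_sum, he1 x, mul_one]
  -- a global minimizer exists
  obtain ⟨fmin, hfmin⟩ : ∃ f : 𝒵 → 𝒴, ∀ g : 𝒵 → 𝒴,
      (∑ x, ∑ y, ∑ z, ps x y * e x z * ℓ y (f z))
        ≤ ∑ x, ∑ y, ∑ z, ps x y * e x z * ℓ y (g z) := by
    have hex : ∀ z : 𝒵, ∃ a : 𝒴, ∀ a' : 𝒴,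
        (∑ x, ∑ y, ps x y * e x z * ℓ y a) ≤ ∑ x, ∑ y, ps x y * e x z * ℓ y a' := by
      intro z
      obtain ⟨a, -, ha⟩ := Finset.exists_min_image Finset.univ
        (fun a : 𝒴 => ∑ x, ∑ y, ps x y * e x z * ℓ y a) ⟨Classical.arbitrary 𝒴, Finset.mem_univ _⟩
      exact ⟨a, fun a' => ha a' (Finset.mem_univ _)⟩
    choose f hf using hex
    refine ⟨f, fun g => ?_⟩
    rw [hswap ps f, hswap ps g]
    exact Finset.sum_le_sum fun z _ => hf z (g z)
  -- characterization of optimal constant predictors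
  have hconstcond : ∀ f : 𝒵 → 𝒴,
      (∀ g : 𝒵 → 𝒴, (∑ x, ∑ y, ps x y * ℓ y (f z0)) ≤ ∑ x, ∑ y, ps x y * ℓ y (g z0))
        ↔ f z0 = aC := by
    intro f
    constructor
    · intro hf
      by_contra hne
      have h1 := haC (f z0) hne
      have h2 := hf (fun _ => aC)
      linarith
    · intro hf g
      rw [hf]
      rcases eq_or_ne (g z0) aC with h | h
      · rw [h]
      · exact le_of_lt (haC (g z0) h)
  -- the constant-side risk set is a singleton
  have hset2 : ∀ (p : 𝒳 → 𝒴 → ℝ),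
      {r : ℝ | ∃ f : 𝒵 → 𝒴,
          (∀ g : 𝒵 → 𝒴, (∑ x, ∑ y, ps x y * ℓ y (f z0))
              ≤ ∑ x, ∑ y, ps x y * ℓ y (g z0))
          ∧ r = ∑ x, ∑ y, p x y * ℓ y (f z0)}
        = {∑ x, ∑ y, p x y * ℓ y aC} := by
    intro p
    ext r
    simp only [Set.mem_setOf_eq, Set.mem_singleton_iff]
    constructor
    · rintro ⟨f, hf, rfl⟩
      rw [(hconstcond f).mp hf]
    · rintro rfl
      exact ⟨fun _ => aC, (hconstcond (fun _ => aC)).mpr rfl, rfl⟩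
  -- THE CLAIM: some x outside the source support reaches, via e, a z where some
  -- minimizer disagrees with aC
  obtain ⟨xs, hxs0, f₀, hf₀, zs, hzs, hfzs⟩ :
      ∃ xs : 𝒳, (∑ y, ps xs y = 0) ∧ ∃ f₀ : 𝒵 → 𝒴,
        (∀ g : 𝒵 → 𝒴, (∑ x, ∑ y, ∑ z, ps x y * e x z * ℓ y (f₀ z))
            ≤ ∑ x, ∑ y, ∑ z, ps x y * e x z * ℓ y (g z)) ∧
        ∃ zs : 𝒵, 0 < e xs zs ∧ f₀ zs ≠ aC := by
    by_contra hcon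
    push_neg at hcon
    have hkey : ∀ f : 𝒵 → 𝒴,
        (∀ g : 𝒵 → 𝒴, (∑ x, ∑ y, ∑ z, ps x y * e x z * ℓ y (f z))
            ≤ ∑ x, ∑ y, ∑ z, ps x y * e x z * ℓ y (g z)) →
        (∑ x, ∑ y, ∑ z, ptg x y * e x z * ℓ y (f z)) = ∑ x, ∑ y, ptg x y * ℓ y aC := by
      intro f hf
      refine Finset.sum_congr rfl fun x _ => ?_
      rcases le_or_gt (∑ y, ptg x y) 0 with hx | hx
      · have hsum0 : ∑ y, ptg x y = 0 :=
          le_antisymm hx (Finset.sum_nonneg fun y _ => hptg x y)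
        have h0 : ∀ y, ptg x y = 0 := fun y =>
          (Finset.sum_eq_zero_iff_of_nonneg (fun y _ => hptg x y)).mp hsum0 y (Finset.mem_univ y)
        simp [h0]
      · have hps0 : ∑ y, ps x y = 0 := hsupp_out hx
        refine Finset.sum_congr rfl fun y _ => ?_
        have hterm : ∀ z, ptg x y * e x z * ℓ y (f z) = (ptg x y * ℓ y aC) * e x z := by
          intro z
          rcases eq_or_lt_of_le (he x z) with hez | hez
          · rw [← hez]; ring
          · rw [hcon x hps0 f hf z hez]; ring
        rw [Finset.sum_congr rfl fun z _ => hterm z, ← Finset.mul_sum, he1 x, mul_one]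
    have hS1 : {r : ℝ | ∃ f : 𝒵 → 𝒴,
          (∀ g : 𝒵 → 𝒴, (∑ x, ∑ y, ∑ z, ps x y * e x z * ℓ y (f z))
              ≤ ∑ x, ∑ y, ∑ z, ps x y * e x z * ℓ y (g z))
          ∧ r = ∑ x, ∑ y, ∑ z, ptg x y * e x z * ℓ y (f z)}
        = {∑ x, ∑ y, ptg x y * ℓ y aC} := by
      ext r
      simp only [Set.mem_setOf_eq, Set.mem_singleton_iff]
      constructor
      · rintro ⟨f, hf, rfl⟩; exact hkey f hf
      · rintro rfl; exact ⟨fmin, hfmin, (hkey fmin hfmin).symm⟩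
    rw [hS1, hset2 ptg, csSup_singleton] at hgood
    exact lt_irrefl _ hgood
  have hpsxs : ∀ y, ps xs y = 0 := fun y =>
    (Finset.sum_eq_zero_iff_of_nonneg (fun y _ => hps xs y)).mp hxs0 y (Finset.mem_univ y)
  -- the pair (b, q)
  obtain ⟨b, q, hbI, hqnn, hq1, hqmode, hqaC, hT⟩ :
      ∃ (b : 𝒴) (q : 𝒴 → ℝ), b ∈ Fs '' {x | 0 < ∑ y, ps x y} ∧ (∀ y, 0 ≤ q y)
        ∧ (∑ y, q y = 1) ∧ (∀ a, a ≠ b → q a < q b) ∧ 0 < q aC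
        ∧ (∑ z, e xs z * q (f₀ z)) < q aC := by
    set μ : 𝒴 → ℝ := fun y => ∑ z, if f₀ z = y then e xs z else 0 with hμ
    have hμnn : ∀ y, 0 ≤ μ y := by
      intro y
      refine Finset.sum_nonneg fun z _ => ?_
      split_ifs
      · exact he xs z
      · exact le_refl _
    have hμ1 : ∑ y, μ y = 1 := by
      rw [hμ]
      simp only []
      rw [Finset.sum_comm]
      rw [Finset.sum_congr rfl fun z (_ : z ∈ Finset.univ) =>
        Finset.sum_ite_eq Finset.univ (f₀ z) (fun _ => e xs z)]
      simp [he1 xs]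
    have hμexp : ∀ q' : 𝒴 → ℝ, (∑ z, e xs z * q' (f₀ z)) = ∑ y, μ y * q' y := by
      intro q'
      calc ∑ z, e xs z * q' (f₀ z)
          = ∑ z, ∑ y, (if f₀ z = y then e xs z * q' y else 0) := by
            refine Finset.sum_congr rfl fun z _ => ?_
            rw [Finset.sum_ite_eq Finset.univ (f₀ z) (fun y => e xs z * q' y)]
            simp
        _ = ∑ y, ∑ z, (if f₀ z = y then e xs z * q' y else 0) := Finset.sum_comm
        _ = ∑ y, μ y * q' y := by
            refine Finset.sum_congr rfl fun y _ => ?_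
            rw [hμ]
            simp only []
            rw [Finset.sum_mul]
            refine Finset.sum_congr rfl fun z _ => ?_
            split_ifs <;> ring
    have hμb1 : ∀ y, μ y ≤ 1 := by
      intro y
      rw [← hμ1]
      exact Finset.single_le_sum (fun y _ => hμnn y) (Finset.mem_univ y)
    have hμaC : μ aC ≤ 1 - e xs zs := by
      have hle : ∀ z ∈ Finset.univ,
          (if f₀ z = aC then e xs z else 0) ≤ (if z = zs then 0 else e xs z) := by
        intro z _
        by_cases hz : z = zs
        · subst hz; simp [hfzs]
        · simp only [if_neg hz]
          split_ifs
          · exact le_refl _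
          · exact he xs z
      calc μ aC ≤ ∑ z, if z = zs then 0 else e xs z := Finset.sum_le_sum hle
        _ = (∑ z, e xs z) - e xs zs := by
            rw [Finset.sum_congr rfl fun z (_ : z ∈ Finset.univ) =>
              show (if z = zs then 0 else e xs z) = e xs z - (if z = zs then e xs z else 0) by
                split_ifs <;> ring]
            rw [Finset.sum_sub_distrib, Finset.sum_ite_eq' Finset.univ zs (e xs)]
            simp
        _ = 1 - e xs zs := by rw [he1 xs]
    have hμaC1 : μ aC < 1 := by linarith
    by_cases haCI : aC ∈ Fs '' {x | 0 < ∑ y, ps x y}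
    · -- case A : the deterministic point mass at aC
      refine ⟨aC, fun y => if y = aC then 1 else 0, haCI, ?_, ?_, ?_, ?_, ?_⟩
      · show ∀ y, 0 ≤ if y = aC then (1:ℝ) else 0
        intro y; split_ifs <;> norm_num
      · show (∑ y, if y = aC then (1:ℝ) else 0) = 1
        rw [Finset.sum_ite_eq' Finset.univ aC (fun _ => (1:ℝ))]; simp
      · show ∀ a, a ≠ aC → (if a = aC then (1:ℝ) else 0) < (if aC = aC then (1:ℝ) else 0)
        intro a ha; simp [ha]
      · show (0:ℝ) < (if aC = aC then (1:ℝ) else 0)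
        simp
      · show (∑ z, e xs z * (if f₀ z = aC then (1:ℝ) else 0))
            < (if aC = aC then (1:ℝ) else 0)
        rw [hμexp (fun y => if y = aC then (1:ℝ) else 0)]
        simp only [mul_ite, mul_one, mul_zero, if_pos rfl]
        rw [Finset.sum_ite_eq' Finset.univ aC μ]
        simpa using hμaC1
    · -- case B : aC is not in the image
      have hsrc_ne : ∃ x, 0 < ∑ y, ps x y := by
        by_contra h
        push_neg at h
        have h0 : ∀ x, ∑ y, ps x y = 0 := fun x =>
          le_antisymm (h x) (Finset.sum_nonneg fun y _ => hps x y)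
        rw [Finset.sum_congr rfl fun x _ => h0 x] at hps1
        simp at hps1
      obtain ⟨x1, hx1⟩ := hsrc_ne
      have hb1I : Fs x1 ∈ Fs '' {x | 0 < ∑ y, ps x y} := ⟨x1, hx1, rfl⟩
      have hb1aC : Fs x1 ≠ aC := fun h => haCI (h ▸ hb1I)
      -- a second, distinct element of the image
      have hb2 : ∃ x2, (0 < ∑ y, ps x2 y) ∧ Fs x2 ≠ Fs x1 := by
        by_contra h
        push_neg at h
        -- then the image is {Fs x1} and aC = Fs x1
        have hpt : ∀ x, 0 < (∑ y, ps x y) →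
            (∑ y, ps x y * ℓ y (Fs x1)) < ∑ y, ps x y * ℓ y aC := by
          intro x hx
          have hfsx : Fs x = Fs x1 := h x hx
          have hne : aC ≠ Fs x := by rw [hfsx]; exact Ne.symm hb1aC
          have := hFs x hx aC hne
          rwa [hfsx] at this
        have hlt : (∑ x, ∑ y, ps x y * ℓ y (Fs x1)) < ∑ x, ∑ y, ps x y * ℓ y aC := by
          refine Finset.sum_lt_sum (fun x _ => ?_) ⟨x1, Finset.mem_univ x1, hpt x1 hx1⟩
          rcases le_or_gt (∑ y, ps x y) 0 with hx | hx
          · have h0 : ∀ y, ps x y = 0 := fun y =>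
              (Finset.sum_eq_zero_iff_of_nonneg (fun y _ => hps x y)).mp
                (le_antisymm hx (Finset.sum_nonneg fun y _ => hps x y)) y (Finset.mem_univ y)
            simp [h0]
          · exact le_of_lt (hpt x hx)
        have := haC (Fs x1) hb1aC
        linarith
      obtain ⟨x2, hx2, hx21⟩ := hb2
      have hb2I : Fs x2 ∈ Fs '' {x | 0 < ∑ y, ps x y} := ⟨x2, hx2, rfl⟩
      have hb2aC : Fs x2 ≠ aC := fun h => haCI (h ▸ hb2I)
      -- choose b with μ aC + μ b < 1
      have hbexists : ∃ b, b ∈ Fs '' {x | 0 < ∑ y, ps x y} ∧ b ≠ aC ∧ μ aC + μ b < 1 := by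
        by_cases hb : μ aC + μ (Fs x1) < 1
        · exact ⟨Fs x1, hb1I, hb1aC, hb⟩
        · push_neg at hb
          refine ⟨Fs x2, hb2I, hb2aC, ?_⟩
          have hsum3 : μ aC + μ (Fs x1) + μ (Fs x2) ≤ 1 := by
            rw [← hμ1]
            have hsub : ({aC, Fs x1, Fs x2} : Finset 𝒴) ⊆ Finset.univ :=
              Finset.subset_univ _
            calc μ aC + μ (Fs x1) + μ (Fs x2)
                = ∑ y ∈ ({aC, Fs x1, Fs x2} : Finset 𝒴), μ y := by
                  rw [Finset.sum_insert, Finset.sum_insert, Finset.sum_singleton]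
                  · ring
                  · simp [hx21, Ne.symm hx21]
                  · simp [Ne.symm hb1aC, Ne.symm hb2aC]
              _ ≤ ∑ y, μ y :=
                  Finset.sum_le_sum_of_subset_of_nonneg hsub fun y _ _ => hμnn y
          have hμb2 : μ (Fs x2) ≤ 0 := by linarith
          have := hμnn (Fs x2)
          linarith
      obtain ⟨b, hbI, hbaC, hτ⟩ := hbexists
      set τ : ℝ := 1 - μ aC - μ b with hτdef
      have hτpos : 0 < τ := by simp only [hτdef]; linarith
      have hτle1 : τ ≤ 1 := by
        have := hμnn aC; have := hμnn b; simp only [hτdef]; linarith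
      set εq : ℝ := τ / 4 with hεq
      have hεqpos : 0 < εq := by positivity
      have hεqle : εq ≤ 1 / 4 := by simp only [hεq]; linarith
      set α : ℝ := (1 - εq) / 2 with hα
      have hαpos : 0 < α := by simp only [hα]; linarith
      have hαge : 3 / 8 ≤ α := by simp only [hα]; linarith
      refine ⟨b, fun y => if y = b then α + εq else if y = aC then α else 0, hbI,
        ?_, ?_, ?_, ?_, ?_⟩
      · show ∀ y, 0 ≤ if y = b then α + εq else if y = aC then α else 0
        intro y; split_ifs <;> linarith
      · show (∑ y, if y = b then α + εq else if y = aC then α else 0) = 1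
        have hqsplit : ∀ y : 𝒴, (if y = b then α + εq else if y = aC then α else 0)
            = (if y = b then α + εq else 0) + (if y = aC then α else 0) := by
          intro y
          by_cases h1 : y = b
          · subst h1; simp [if_neg hbaC]
          · simp [h1]
        rw [Finset.sum_congr rfl fun y _ => hqsplit y, Finset.sum_add_distrib,
          Finset.sum_ite_eq' Finset.univ b (fun _ => α + εq),
          Finset.sum_ite_eq' Finset.univ aC (fun _ => α)]
        simp only [Finset.mem_univ, if_true]
        simp only [hα]; ring
      · show ∀ a, a ≠ b → (if a = b then α + εq else if a = aC then α else 0)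
            < (if b = b then α + εq else if b = aC then α else 0)
        intro a ha
        simp only [if_neg ha, if_pos rfl]
        split_ifs <;> linarith
      · -- 0 < q aC
        show (0:ℝ) < (if aC = b then α + εq else if aC = aC then α else 0)
        have haCb : ¬ (aC = b) := fun h => hbaC h.symm
        simp only [if_neg haCb, if_pos rfl]
        exact hαpos
      · -- the key bound
        show (∑ z, e xs z * (if f₀ z = b then α + εq else if f₀ z = aC then α else 0))
            < (if aC = b then α + εq else if aC = aC then α else 0)
        have haCb : ¬ (aC = b) := fun h => hbaC h.symm
        rw [hμexp (fun y => if y = b then α + εq else if y = aC then α else 0)]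
        have hqsplit2 : ∀ y : 𝒴,
            μ y * (if y = b then α + εq else if y = aC then α else 0)
              = (if y = b then μ y * (α + εq) else 0) + (if y = aC then μ y * α else 0) := by
          intro y
          by_cases h1 : y = b
          · subst h1; simp [if_neg hbaC]
          · by_cases h2 : y = aC
            · subst h2; simp [haCb]
            · simp [h1, h2]
        rw [Finset.sum_congr rfl fun y _ => hqsplit2 y, Finset.sum_add_distrib,
          Finset.sum_ite_eq' Finset.univ b (fun y => μ y * (α + εq)),
          Finset.sum_ite_eq' Finset.univ aC (fun y => μ y * α)]
        simp only [Finset.mem_univ, if_true, if_neg haCb, if_pos rfl]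
        have hkey : μ aC + μ b = 1 - τ := by simp only [hτdef]; ring
        have h1 : μ b ≤ 1 := hμb1 b
        have h2 : 0 ≤ μ b := hμnn b
        have h3 : 0 ≤ μ aC := hμnn aC
        nlinarith [hτpos, hαge, hεqpos]
  -- abbreviations
  set c : ℝ := ∑ x, ∑ y, ps x y * ℓ y aC with hc
  set m : ℝ := ∑ x, ∑ y, ∑ z, ps x y * e x z * ℓ y (f₀ z) with hm
  set T : ℝ := ∑ z, e xs z * q (f₀ z) with hTdef
  have hmc : m ≤ c := by
    have := hf₀ (fun _ => aC); rw [hRsconst] at this; exact this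
  set G : ℝ := q aC - T with hG
  have hGpos : 0 < G := by simp only [hG]; linarith
  set ε₀ : ℝ := G / (G + (c - m)) with hε₀
  have hden : 0 < G + (c - m) := by linarith
  have hε₀pos : 0 < ε₀ := div_pos hGpos hden
  have hε₀le1 : ε₀ ≤ 1 := by
    rw [hε₀, div_le_one hden]; linarith
  -- the family of bad domains
  set Pt : ℝ → 𝒳 → 𝒴 → ℝ :=
    fun δ x y => (1 - δ) * (if x = xs then q y else 0) + δ * ps x y with hPt
  have hmem : ∀ δ ∈ Set.Ioo (0:ℝ) ε₀, Pt δ ∈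
      {pt : 𝒳 → 𝒴 → ℝ |
      (∀ x y, 0 ≤ pt x y) ∧ (∑ x, ∑ y, pt x y = 1) ∧
      (∃ Fb : 𝒳 → 𝒴,
        (∀ x, 0 < (∑ y, pt x y) → ∀ a, a ≠ Fb x →
          (∑ y, pt x y * ℓ y (Fb x)) < ∑ y, pt x y * ℓ y a) ∧
        Fb '' {x : 𝒳 | 0 < ∑ y, pt x y} = Fs '' {x : 𝒳 | 0 < ∑ y, ps x y}) ∧
      sSup {r : ℝ | ∃ f : 𝒵 → 𝒴,
          (∀ g : 𝒵 → 𝒴, (∑ x, ∑ y, ps x y * ℓ y (f z0))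
              ≤ ∑ x, ∑ y, ps x y * ℓ y (g z0))
          ∧ r = ∑ x, ∑ y, pt x y * ℓ y (f z0)}
        < sSup {r : ℝ | ∃ f : 𝒵 → 𝒴,
            (∀ g : 𝒵 → 𝒴, (∑ x, ∑ y, ∑ z, ps x y * e x z * ℓ y (f z))
                ≤ ∑ x, ∑ y, ∑ z, ps x y * e x z * ℓ y (g z))
            ∧ r = ∑ x, ∑ y, ∑ z, pt x y * e x z * ℓ y (f z)}} := by
    rintro δ ⟨hδ0, hδε⟩
    have hδ1 : δ < 1 := lt_of_lt_of_le hδε hε₀le1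
    have h1δ : 0 < 1 - δ := by linarith
    -- row sums of Pt δ
    have hsum : ∀ x, (∑ y, Pt δ x y)
        = (1 - δ) * (if x = xs then 1 else 0) + δ * ∑ y, ps x y := by
      intro x
      show (∑ y, ((1 - δ) * (if x = xs then q y else 0) + δ * ps x y)) = _
      by_cases hxx : x = xs
      · simp only [if_pos hxx]
        rw [Finset.sum_add_distrib, ← Finset.mul_sum, ← Finset.mul_sum, hq1]
      · simp only [if_neg hxx]
        rw [Finset.sum_add_distrib, ← Finset.mul_sum, ← Finset.mul_sum]
        simp
    have hptval : ∀ y, Pt δ xs y = (1 - δ) * q y := by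
      intro y
      show (1 - δ) * (if xs = xs then q y else 0) + δ * ps xs y = _
      rw [if_pos rfl, hpsxs y]; ring
    have hptval' : ∀ x, x ≠ xs → ∀ y, Pt δ x y = δ * ps x y := by
      intro x hxx y
      show (1 - δ) * (if x = xs then q y else 0) + δ * ps x y = _
      rw [if_neg hxx]; ring
    refine ⟨?_, ?_, ?_, ?_⟩
    · -- nonnegativity
      intro x y
      show 0 ≤ (1 - δ) * (if x = xs then q y else 0) + δ * ps x y
      have h1 : 0 ≤ (if x = xs then q y else 0) := by
        split_ifs
        · exact hqnn y
        · exact le_refl _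
      have h2 := hps x y
      nlinarith
    · -- total mass one
      calc ∑ x, ∑ y, Pt δ x y
          = ∑ x, ((1 - δ) * (if x = xs then 1 else 0) + δ * ∑ y, ps x y) :=
            Finset.sum_congr rfl fun x _ => hsum x
        _ = (1 - δ) * (∑ x, if x = xs then (1:ℝ) else 0) + δ * ∑ x, ∑ y, ps x y := by
            rw [Finset.sum_add_distrib, ← Finset.mul_sum, ← Finset.mul_sum]
        _ = 1 := by
            rw [Finset.sum_ite_eq' Finset.univ xs (fun _ => (1:ℝ)), hps1]
            simp
    · -- the Bayes predictor of Pt δ and its image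
      have hcxs : ∀ a, (∑ y, Pt δ xs y * ℓ y a) = (1 - δ) * (1 - q a) := by
        intro a
        rw [hrow (fun y => Pt δ xs y) a]
        rw [Finset.sum_congr rfl fun y _ => hptval y, ← Finset.mul_sum, hq1, hptval a]
        ring
      refine ⟨fun x => if x = xs then b else Fs x, ?_, ?_⟩
      · intro x hx a ha
        have hFbeta : ∀ x' : 𝒳, (fun x' => if x' = xs then b else Fs x') x'
            = if x' = xs then b else Fs x' := fun _ => rfl
        simp only [hFbeta] at ha ⊢
        by_cases hxx : x = xs
        · simp only [if_pos hxx] at ha ⊢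
          rw [hxx]
          rw [hcxs a, hcxs b]
          have := hqmode a ha
          nlinarith
        · rw [if_neg hxx] at ha
          have hxpos : 0 < ∑ y, ps x y := by
            rw [hsum x, if_neg hxx] at hx
            by_contra hle
            push_neg at hle
            have h0 : ∑ y, ps x y = 0 :=
              le_antisymm hle (Finset.sum_nonneg fun y _ => hps x y)
            rw [h0] at hx
            simp at hx
          rw [if_neg hxx]
          have hstrict := hFs x hxpos a ha
          have hca : ∀ a', (∑ y, Pt δ x y * ℓ y a') = δ * ∑ y, ps x y * ℓ y a' := by
            intro a'
            rw [Finset.sum_congr rfl fun y _ =>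
              show Pt δ x y * ℓ y a' = δ * (ps x y * ℓ y a') by
                rw [hptval' x hxx y]; ring,
              ← Finset.mul_sum]
          rw [hca a, hca (Fs x)]
          exact mul_lt_mul_of_pos_left hstrict hδ0
      · -- image equality
        have hsupp : {x : 𝒳 | 0 < ∑ y, Pt δ x y} = insert xs {x : 𝒳 | 0 < ∑ y, ps x y} := by
          ext x
          simp only [Set.mem_setOf_eq, Set.mem_insert_iff]
          rw [hsum x]
          by_cases hxx : x = xs
          · rw [if_pos hxx, hxx, hxs0]
            constructor
            · intro _; exact Or.inl rfl
            · intro _; nlinarith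
          · simp only [if_neg hxx, mul_zero, zero_add]
            constructor
            · intro h
              right
              by_contra hle
              push_neg at hle
              have h0 : ∑ y, ps x y = 0 :=
                le_antisymm hle (Finset.sum_nonneg fun y _ => hps x y)
              rw [h0] at h
              simp at h
            · rintro (h | h)
              · exact absurd h hxx
              · exact mul_pos hδ0 h
        rw [hsupp, Set.image_insert_eq, if_pos rfl]
        have himg : (fun x => if x = xs then b else Fs x) '' {x : 𝒳 | 0 < ∑ y, ps x y}
            = Fs '' {x : 𝒳 | 0 < ∑ y, ps x y} := by
          apply Set.image_congr
          intro x hx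
          have hxx : x ≠ xs := by
            intro h
            rw [Set.mem_setOf_eq, h, hxs0] at hx
            exact lt_irrefl 0 hx
          simp [hxx]
        rw [himg]
        exact Set.insert_eq_self.mpr hbI
    · -- the sSup inequality
      rw [hset2 (Pt δ), csSup_singleton]
      -- value of the constant representation
      have hV : (∑ x, ∑ y, Pt δ x y * ℓ y aC) = (1 - δ) * (1 - q aC) + δ * c := by
        calc ∑ x, ∑ y, Pt δ x y * ℓ y aC
            = ∑ x, ∑ y, ((1 - δ) * ((if x = xs then q y else 0) * ℓ y aC)
                + δ * (ps x y * ℓ y aC)) := by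
              refine Finset.sum_congr rfl fun x _ => Finset.sum_congr rfl fun y _ => ?_
              show ((1 - δ) * (if x = xs then q y else 0) + δ * ps x y) * ℓ y aC = _
              ring
          _ = (1 - δ) * (∑ x, ∑ y, (if x = xs then q y else 0) * ℓ y aC)
                + δ * (∑ x, ∑ y, ps x y * ℓ y aC) := by
              simp only [Finset.sum_add_distrib, Finset.mul_sum]
          _ = (1 - δ) * (1 - q aC) + δ * c := by
              rw [hc]
              congr 2
              have hx : ∀ x, (∑ y, (if x = xs then q y else 0) * ℓ y aC)
                  = if x = xs then (1 - q aC) else 0 := by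
                intro x
                by_cases hxx : x = xs
                · simp only [if_pos hxx]
                  rw [hrow q aC, hq1]
                · simp [hxx]
              rw [Finset.sum_congr rfl fun x _ => hx x,
                Finset.sum_ite_eq' Finset.univ xs (fun _ => 1 - q aC)]
              simp
      -- the risk of f₀ on Pt δ
      have hinner : (∑ y, ∑ z, q y * e xs z * ℓ y (f₀ z)) = 1 - T := by
        rw [Finset.sum_comm]
        have hz : ∀ z, (∑ y, q y * e xs z * ℓ y (f₀ z))
            = e xs z - e xs z * q (f₀ z) := by
          intro z
          rw [hrow (fun y => q y * e xs z) (f₀ z)]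
          rw [← Finset.sum_mul, hq1]
          ring
        rw [Finset.sum_congr rfl fun z _ => hz z, Finset.sum_sub_distrib, he1 xs, hTdef]
      have hr0 : (∑ x, ∑ y, ∑ z, Pt δ x y * e x z * ℓ y (f₀ z))
          = (1 - δ) * (1 - T) + δ * m := by
        calc ∑ x, ∑ y, ∑ z, Pt δ x y * e x z * ℓ y (f₀ z)
            = ∑ x, ∑ y, ∑ z, ((1 - δ) * ((if x = xs then q y else 0) * e x z * ℓ y (f₀ z))
                + δ * (ps x y * e x z * ℓ y (f₀ z))) := by
              refine Finset.sum_congr rfl fun x _ => Finset.sum_congr rfl fun y _ =>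
                Finset.sum_congr rfl fun z _ => ?_
              show ((1 - δ) * (if x = xs then q y else 0) + δ * ps x y) * e x z * ℓ y (f₀ z) = _
              ring
          _ = (1 - δ) * (∑ x, ∑ y, ∑ z, (if x = xs then q y else 0) * e x z * ℓ y (f₀ z))
                + δ * (∑ x, ∑ y, ∑ z, ps x y * e x z * ℓ y (f₀ z)) := by
              simp only [Finset.sum_add_distrib, Finset.mul_sum]
          _ = (1 - δ) * (1 - T) + δ * m := by
              rw [hm]
              congr 2
              have hx : ∀ x, (∑ y, ∑ z, (if x = xs then q y else 0) * e x z * ℓ y (f₀ z))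
                  = if x = xs then (1 - T) else 0 := by
                intro x
                by_cases hxx : x = xs
                · simp only [if_pos hxx]
                  rw [hxx]
                  exact hinner
                · simp [hxx]
              rw [Finset.sum_congr rfl fun x _ => hx x,
                Finset.sum_ite_eq' Finset.univ xs (fun _ => 1 - T)]
              simp
      -- the encoder-side risk set is finite, hence bounded above
      have hSfin : {r : ℝ | ∃ f : 𝒵 → 𝒴,
          (∀ g : 𝒵 → 𝒴, (∑ x, ∑ y, ∑ z, ps x y * e x z * ℓ y (f z))
              ≤ ∑ x, ∑ y, ∑ z, ps x y * e x z * ℓ y (g z))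
          ∧ r = ∑ x, ∑ y, ∑ z, Pt δ x y * e x z * ℓ y (f z)}.Finite := by
        have hsub : {r : ℝ | ∃ f : 𝒵 → 𝒴,
            (∀ g : 𝒵 → 𝒴, (∑ x, ∑ y, ∑ z, ps x y * e x z * ℓ y (f z))
                ≤ ∑ x, ∑ y, ∑ z, ps x y * e x z * ℓ y (g z))
            ∧ r = ∑ x, ∑ y, ∑ z, Pt δ x y * e x z * ℓ y (f z)}
            ⊆ (fun f : 𝒵 → 𝒴 => ∑ x, ∑ y, ∑ z, Pt δ x y * e x z * ℓ y (f z)) '' Set.univ := by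
          rintro r ⟨f, hf, rfl⟩
          exact ⟨f, trivial, rfl⟩
        exact ((Set.finite_univ).image _).subset hsub
      refine lt_of_lt_of_le ?_ (le_csSup hSfin.bddAbove ⟨f₀, hf₀, hr0.symm⟩)
      rw [hV]
      have hδden : δ * (G + (c - m)) < G := by
        rw [hε₀] at hδε
        exact (lt_div_iff₀ hden).mp hδε
      rw [hG] at hδden
      nlinarith [hδden]
  -- injectivity and conclusion
  haveI : Infinite (Set.Ioo (0:ℝ) ε₀) := Set.Ioo.infinite hε₀pos
  refine Set.infinite_of_injective_forall_mem
    (f := fun δ : Set.Ioo (0:ℝ) ε₀ => Pt δ) ?_ ?_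
  · -- injectivity
    rintro ⟨δ1, hδ1⟩ ⟨δ2, hδ2⟩ heq
    have h1 : Pt δ1 xs aC = Pt δ2 xs aC := by
      exact congrFun (congrFun heq xs) aC
    have h2 : (1 - δ1) * q aC = (1 - δ2) * q aC := by
      simpa [hPt, hpsxs aC] using h1
    have h3 : δ1 = δ2 := by
      have := mul_right_cancel₀ (ne_of_gt hqaC) h2
      linarith
    exact Subtype.ext h3
  · intro δ; exact hmem δ δ.2
end

section
/- (Log-loss conditional entropy equality forces equal posteriors.) Let A — X — Z be a Markov chain of discrete random variables with H(A) < ∞. If H(A|Z) = H(A|X), then for every (x, z) in the support of the joint distribution of (X, Z), the conditional distributions satisfy p(A|z) = p(A|x). -/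
open Finset

private lemma gibbs_nonneg {q r : ℝ} (hq : 0 ≤ q) (h : 0 < q → 0 < r) (hr : 0 ≤ r) :
    q - r ≤ q * Real.log (q / r) := by
  rcases hq.eq_or_lt with hq0 | hq0
  · simp [← hq0, hr]
  · have hr0 := h hq0
    have h1 : Real.log (r / q) ≤ r / q - 1 := Real.log_le_sub_one_of_pos (div_pos hr0 hq0)
    have h2 : Real.log (q / r) = -Real.log (r / q) := by
      rw [← Real.log_inv, inv_div]
    have h3 : q * Real.log (r / q) ≤ q * (r / q - 1) :=
      mul_le_mul_of_nonneg_left h1 hq0.le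
    have h4 : q * (r / q) = r := by field_simp
    rw [h2]
    nlinarith [h3, h4]

private lemma gibbs_eq {q r : ℝ} (hq : 0 ≤ q) (h : 0 < q → 0 < r) (hr : 0 ≤ r)
    (heq : q * Real.log (q / r) = q - r) : q = r := by
  rcases hq.eq_or_lt with hq0 | hq0
  · rw [← hq0] at heq ⊢
    simp only [zero_mul, zero_sub] at heq
    linarith
  · have hr0 := h hq0
    by_contra hne
    have hs : r / q ≠ 1 := by
      intro h1
      rw [div_eq_one_iff_eq hq0.ne'] at h1
      exact hne h1.symm
    have h1 := Real.log_lt_sub_one_of_pos (div_pos hr0 hq0) hs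
    have h2 : Real.log (q / r) = -Real.log (r / q) := by
      rw [← Real.log_inv, inv_div]
    have h3 : q * Real.log (r / q) < q * (r / q - 1) :=
      mul_lt_mul_of_pos_left h1 hq0
    have h4 : q * (r / q) = r := by field_simp
    rw [h2] at heq
    nlinarith [h3, h4]

/-- conditional distribution of `a` given `x` -/
private noncomputable def condQ {𝒜 𝒳 𝒵 : Type*} [Fintype 𝒜] [Fintype 𝒵]
    (p : 𝒜 → 𝒳 → 𝒵 → ℝ) (a : 𝒜) (x : 𝒳) : ℝ :=
  (∑ z, p a x z) / (∑ a', ∑ z', p a' x z')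

/-- conditional distribution of `a` given `z` -/
private noncomputable def condR {𝒜 𝒳 𝒵 : Type*} [Fintype 𝒜] [Fintype 𝒳]
    (p : 𝒜 → 𝒳 → 𝒵 → ℝ) (a : 𝒜) (z : 𝒵) : ℝ :=
  (∑ x, p a x z) / (∑ a', ∑ x', p a' x' z)

private noncomputable def phi {𝒜 𝒳 𝒵 : Type*} [Fintype 𝒜] [Fintype 𝒳] [Fintype 𝒵]
    (p : 𝒜 → 𝒳 → 𝒵 → ℝ) (a : 𝒜) (x : 𝒳) (z : 𝒵) : ℝ :=
  p a x z * (Real.log (condQ p a x) - Real.log (condR p a z))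
    - (∑ a', p a' x z) * (condQ p a x - condR p a z)

section main
variable {𝒜 𝒳 𝒵 : Type*} [Fintype 𝒜] [Fintype 𝒳] [Fintype 𝒵]
variable (p : 𝒜 → 𝒳 → 𝒵 → ℝ)

private lemma phi_nonneg (hp : ∀ a x z, 0 ≤ p a x z)
    (hmarkov : ∀ a x z,
      p a x z * (∑ a', ∑ z', p a' x z') = (∑ z', p a x z') * (∑ a', p a' x z))
    (a : 𝒜) (x : 𝒳) (z : 𝒵) : 0 ≤ phi p a x z := by
  have hRnn : 0 ≤ condR p a z :=
    div_nonneg (sum_nonneg fun i _ => hp a i z)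
      (sum_nonneg fun i _ => sum_nonneg fun j _ => hp i j z)
  have hPXZnn : 0 ≤ ∑ a', p a' x z := sum_nonneg fun i _ => hp i x z
  rcases (hp a x z).eq_or_lt with hp0 | hp0
  · -- p a x z = 0
    have hm := hmarkov a x z
    rw [← hp0, zero_mul] at hm
    have hzQ : (∑ a', p a' x z) * condQ p a x = 0 := by
      rcases eq_or_ne (∑ a', ∑ z', p a' x z') 0 with h0 | h0
      · simp [condQ, h0]
      · rw [condQ, mul_comm, div_mul_eq_mul_div, div_eq_zero_iff]
        exact Or.inl hm.symm
    have : phi p a x z = (∑ a', p a' x z) * condR p a z := by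
      rw [phi, ← hp0, zero_mul, zero_sub, mul_sub, hzQ, zero_sub, neg_neg]
    rw [this]
    exact mul_nonneg hPXZnn hRnn
  · -- p a x z > 0
    have hPAX : 0 < ∑ z', p a x z' :=
      lt_of_lt_of_le hp0 (Finset.single_le_sum (fun i _ => hp a x i) (mem_univ z))
    have hPAZ : 0 < ∑ x', p a x' z :=
      lt_of_lt_of_le hp0 (Finset.single_le_sum (fun i _ => hp a i z) (mem_univ x))
    have hPX : 0 < ∑ a', ∑ z', p a' x z' :=
      lt_of_lt_of_le hPAX (Finset.single_le_sum
        (fun i _ => sum_nonneg fun j _ => hp i x j) (mem_univ a))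
    have hPZ : 0 < ∑ a', ∑ x', p a' x' z :=
      lt_of_lt_of_le hPAZ (Finset.single_le_sum
        (fun i _ => sum_nonneg fun j _ => hp i j z) (mem_univ a))
    have hQ : 0 < condQ p a x := div_pos hPAX hPX
    have hR : 0 < condR p a z := div_pos hPAZ hPZ
    have hpeq : p a x z = condQ p a x * (∑ a', p a' x z) := by
      rw [condQ, div_mul_eq_mul_div, eq_div_iff hPX.ne']
      exact hmarkov a x z
    have hld : Real.log (condQ p a x) - Real.log (condR p a z)
        = Real.log (condQ p a x / condR p a z) :=
      (Real.log_div hQ.ne' hR.ne').symm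
    have hg := gibbs_nonneg hQ.le (fun _ => hR) hR.le (r := condR p a z)
    rw [phi, hld, hpeq]
    nlinarith [mul_le_mul_of_nonneg_left hg hPXZnn]

private lemma phi_sum_eq_zero (hp : ∀ a x z, 0 ≤ p a x z)
    (hH : -(∑ a, ∑ z, (∑ x, p a x z) *
            Real.log ((∑ x, p a x z) / (∑ a', ∑ x, p a' x z)))
        = -(∑ a, ∑ x, (∑ z, p a x z) *
            Real.log ((∑ z, p a x z) / (∑ a', ∑ z, p a' x z)))) :
    ∑ x, ∑ z, ∑ a, phi p a x z = 0 := by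
  have hH' : (∑ a, ∑ z, (∑ x, p a x z) *
            Real.log ((∑ x, p a x z) / (∑ a', ∑ x, p a' x z)))
        = (∑ a, ∑ x, (∑ z, p a x z) *
            Real.log ((∑ z, p a x z) / (∑ a', ∑ z, p a' x z))) := by
    linarith
  have hT2 : ∀ x z, ∑ a, (∑ a', p a' x z) * (condQ p a x - condR p a z) = 0 := by
    intro x z
    rw [← Finset.mul_sum]
    rcases eq_or_ne (∑ a', p a' x z) 0 with h0 | h0
    · rw [h0, zero_mul]
    · have hPXZ : 0 < ∑ a', p a' x z :=
        (sum_nonneg fun i _ => hp i x z).lt_of_ne (Ne.symm h0)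
      have hPX : 0 < ∑ a', ∑ z', p a' x z' :=
        lt_of_lt_of_le hPXZ (Finset.sum_le_sum fun i _ =>
          Finset.single_le_sum (fun j _ => hp i x j) (mem_univ z))
      have hPZ : 0 < ∑ a', ∑ x', p a' x' z :=
        lt_of_lt_of_le hPXZ (Finset.sum_le_sum fun i _ =>
          Finset.single_le_sum (fun j _ => hp i j z) (mem_univ x))
      have e1 : ∑ a, condQ p a x = 1 := by
        simp only [condQ]
        rw [← Finset.sum_div, div_self hPX.ne']
      have e2 : ∑ a, condR p a z = 1 := by
        simp only [condR]
        rw [← Finset.sum_div, div_self hPZ.ne']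
      rw [Finset.sum_sub_distrib, e1, e2, sub_self, mul_zero]
  have e1 : ∑ x, ∑ z, ∑ a, p a x z * Real.log (condQ p a x)
      = ∑ a, ∑ x, (∑ z, p a x z) * Real.log (condQ p a x) := by
    rw [Finset.sum_comm]
    calc ∑ z, ∑ x, ∑ a, p a x z * Real.log (condQ p a x)
        = ∑ x, ∑ z, ∑ a, p a x z * Real.log (condQ p a x) := Finset.sum_comm
      _ = ∑ x, ∑ a, ∑ z, p a x z * Real.log (condQ p a x) :=
          Finset.sum_congr rfl fun x _ => Finset.sum_comm
      _ = ∑ x, ∑ a, (∑ z, p a x z) * Real.log (condQ p a x) :=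
          Finset.sum_congr rfl fun x _ => Finset.sum_congr rfl fun a _ =>
            (Finset.sum_mul _ _ _).symm
      _ = ∑ a, ∑ x, (∑ z, p a x z) * Real.log (condQ p a x) := Finset.sum_comm
  have e2 : ∑ x, ∑ z, ∑ a, p a x z * Real.log (condR p a z)
      = ∑ a, ∑ z, (∑ x, p a x z) * Real.log (condR p a z) := by
    calc ∑ x, ∑ z, ∑ a, p a x z * Real.log (condR p a z)
        = ∑ z, ∑ x, ∑ a, p a x z * Real.log (condR p a z) := Finset.sum_comm
      _ = ∑ z, ∑ a, ∑ x, p a x z * Real.log (condR p a z) :=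
          Finset.sum_congr rfl fun z _ => Finset.sum_comm
      _ = ∑ z, ∑ a, (∑ x, p a x z) * Real.log (condR p a z) :=
          Finset.sum_congr rfl fun z _ => Finset.sum_congr rfl fun a _ =>
            (Finset.sum_mul _ _ _).symm
      _ = ∑ a, ∑ z, (∑ x, p a x z) * Real.log (condR p a z) := Finset.sum_comm
  have hT1 : ∑ x, ∑ z, ∑ a,
      p a x z * (Real.log (condQ p a x) - Real.log (condR p a z)) = 0 := by
    simp only [mul_sub, Finset.sum_sub_distrib]
    rw [e1, e2]
    simp only [condQ, condR]
    linarith [hH']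
  have split : ∑ x, ∑ z, ∑ a, phi p a x z
      = (∑ x, ∑ z, ∑ a, p a x z * (Real.log (condQ p a x) - Real.log (condR p a z)))
        - ∑ x, ∑ z, ∑ a, (∑ a', p a' x z) * (condQ p a x - condR p a z) := by
    simp only [phi, Finset.sum_sub_distrib]
  rw [split, hT1,
    Finset.sum_eq_zero fun x _ => Finset.sum_eq_zero fun z _ => hT2 x z, sub_zero]

end main

/-- Log-loss conditional entropy equality forces equal posteriors: for a Markov
chain `A — X — Z` of discrete random variables (joint pmf `p` on `𝒜 × 𝒳 × 𝒵`,
`A ⟂ Z | X`), if `H(A|Z) = H(A|X)` then for every `(x, z)` in the support of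
`(X, Z)` the conditional distributions of `A` given `z` and given `x` coincide
(stated in cross-multiplied form `p(a,z) · p(x) = p(a,x) · p(z)`). -/
theorem cond_entropy_eq_forces_equal_posteriors
    {𝒜 𝒳 𝒵 : Type*} [Fintype 𝒜] [Fintype 𝒳] [Fintype 𝒵]
    (p : 𝒜 → 𝒳 → 𝒵 → ℝ)
    (hp : ∀ a x z, 0 ≤ p a x z)
    (hp1 : ∑ a, ∑ x, ∑ z, p a x z = 1)
    -- Markov chain A — X — Z : A ⟂ Z | X
    (hmarkov : ∀ a x z,
      p a x z * (∑ a', ∑ z', p a' x z') = (∑ z', p a x z') * (∑ a', p a' x z))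
    -- H(A|Z) = H(A|X)
    (hH : -(∑ a, ∑ z, (∑ x, p a x z) *
            Real.log ((∑ x, p a x z) / (∑ a', ∑ x, p a' x z)))
        = -(∑ a, ∑ x, (∑ z, p a x z) *
            Real.log ((∑ z, p a x z) / (∑ a', ∑ z, p a' x z)))) :
    ∀ x z, 0 < (∑ a, p a x z) → ∀ a,
      (∑ x', p a x' z) * (∑ a', ∑ z', p a' x z')
        = (∑ z', p a x z') * (∑ a', ∑ x', p a' x' z) := by
  intro x z hxz a
  -- every phi is zero
  have hs := phi_sum_eq_zero p hp hH
  have h1 : ∑ z, ∑ a, phi p a x z = 0 :=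
    (Finset.sum_eq_zero_iff_of_nonneg fun x _ =>
      sum_nonneg fun z _ => sum_nonneg fun a _ => phi_nonneg p hp hmarkov a x z).mp
      hs x (Finset.mem_univ x)
  have h2 : ∑ a, phi p a x z = 0 :=
    (Finset.sum_eq_zero_iff_of_nonneg fun z _ =>
      sum_nonneg fun a _ => phi_nonneg p hp hmarkov a x z).mp h1 z (Finset.mem_univ z)
  have hzero : phi p a x z = 0 :=
    (Finset.sum_eq_zero_iff_of_nonneg fun a _ => phi_nonneg p hp hmarkov a x z).mp
      h2 a (Finset.mem_univ a)
  -- extract the posterior equality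
  have hPXZ : 0 < ∑ a', p a' x z := hxz
  have hPX : 0 < ∑ a', ∑ z', p a' x z' :=
    lt_of_lt_of_le hPXZ (Finset.sum_le_sum fun i _ =>
      Finset.single_le_sum (fun j _ => hp i x j) (Finset.mem_univ z))
  have hPZ : 0 < ∑ a', ∑ x', p a' x' z :=
    lt_of_lt_of_le hPXZ (Finset.sum_le_sum fun i _ =>
      Finset.single_le_sum (fun j _ => hp i j z) (Finset.mem_univ x))
  rcases (hp a x z).eq_or_lt with hp0 | hp0
  · -- p a x z = 0
    have hm := hmarkov a x z
    rw [← hp0, zero_mul] at hm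
    have hPAX : (∑ z', p a x z') = 0 := by
      rcases mul_eq_zero.mp hm.symm with h | h
      · exact h
      · exact absurd h hPXZ.ne'
    have hQ0 : condQ p a x = 0 := by simp [condQ, hPAX]
    have hz2 : (∑ a', p a' x z) * condR p a z = 0 := by
      have := hzero
      rw [phi, ← hp0, hQ0, zero_mul, zero_sub, mul_sub, mul_zero, zero_sub,
        neg_neg] at this
      exact this
    have hR0 : condR p a z = 0 := by
      rcases mul_eq_zero.mp hz2 with h | h
      · exact absurd h hPXZ.ne'
      · exact h
    have hPAZ : (∑ x', p a x' z) = 0 := by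
      rw [condR, div_eq_zero_iff] at hR0
      rcases hR0 with h | h
      · exact h
      · exact absurd h hPZ.ne'
    rw [hPAZ, hPAX, zero_mul, zero_mul]
  · -- p a x z > 0
    have hPAX : 0 < ∑ z', p a x z' :=
      lt_of_lt_of_le hp0 (Finset.single_le_sum (fun i _ => hp a x i) (Finset.mem_univ z))
    have hPAZ : 0 < ∑ x', p a x' z :=
      lt_of_lt_of_le hp0 (Finset.single_le_sum (fun i _ => hp a i z) (Finset.mem_univ x))
    have hQ : 0 < condQ p a x := div_pos hPAX hPX
    have hR : 0 < condR p a z := div_pos hPAZ hPZ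
    have hpeq : p a x z = condQ p a x * (∑ a', p a' x z) := by
      rw [condQ, div_mul_eq_mul_div, eq_div_iff hPX.ne']
      exact hmarkov a x z
    have hld : Real.log (condQ p a x) - Real.log (condR p a z)
        = Real.log (condQ p a x / condR p a z) :=
      (Real.log_div hQ.ne' hR.ne').symm
    rw [phi, hld, hpeq] at hzero
    have h5 : (∑ a', p a' x z) *
        (condQ p a x * Real.log (condQ p a x / condR p a z)
          - (condQ p a x - condR p a z)) = 0 := by linarith [hzero]
    have heq : condQ p a x * Real.log (condQ p a x / condR p a z)
        = condQ p a x - condR p a z := by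
      rcases mul_eq_zero.mp h5 with h | h
      · exact absurd h hPXZ.ne'
      · linarith
    have hQR := gibbs_eq hQ.le (fun _ => hR) hR.le heq
    rw [condQ, condR, div_eq_div_iff hPX.ne' hPZ.ne'] at hQR
    linarith [hQR]
end

section
/- (Domain-agnostic augmentations imply support match for maximal-invariant encoders.) Let A be an augmentation with A ⟂ D | X on finite spaces, define the equivalence x ~ x′ ⟺ p(A|x) = p(A|x′), and suppose A is domain-agnostic: every equivalence class [x] intersects supp(p(X|d)) for every domain d. Let p(Z|X) be any encoder such that p(Z|x) = p(Z|x′) whenever x ~ x′ (i.e. Z depends on X only through the equivalence class). Then supp(p(Z|d)) = supp(p(Z)) for all domains d. -/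
/-- Domain-agnostic augmentations imply support match for maximal-invariant
encoders: if every augmentation-equivalence class (`x ~ x' ⟺ p(A|x) = p(A|x')`)
intersects the support of every domain, and the encoder depends on `x` only
through its equivalence class, then `supp p(Z|d) = supp p(Z)` for every domain. -/
theorem domain_agnostic_implies_support_match
    {𝒟 𝒳 𝒜g 𝒵 : Type*} [Fintype 𝒟] [Fintype 𝒳] [Fintype 𝒜g] [Fintype 𝒵]
    (pD : 𝒟 → ℝ) (hpD : ∀ d, 0 < pD d) (hpD1 : ∑ d, pD d = 1)
    (pX : 𝒟 → 𝒳 → ℝ) (hpX : ∀ d x, 0 ≤ pX d x) (hpX1 : ∀ d, ∑ x, pX d x = 1)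
    -- the marginal p(X) has full support on 𝒳
    (hfull : ∀ x, 0 < ∑ d, pD d * pX d x)
    -- the augmenter
    (pA : 𝒳 → 𝒜g → ℝ)
    -- domain-agnostic: every equivalence class meets the support of every domain
    (hDA : ∀ d x, ∃ x', 0 < pX d x' ∧ pA x' = pA x)
    -- the encoder depends on X only through the equivalence class
    (e : 𝒳 → 𝒵 → ℝ) (he : ∀ x z, 0 ≤ e x z) (he1 : ∀ x, ∑ z, e x z = 1)
    (hinv : ∀ x x', pA x = pA x' → e x = e x') :
    ∀ d : 𝒟, {z : 𝒵 | 0 < ∑ x, pX d x * e x z}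
      = {z : 𝒵 | 0 < ∑ d', ∑ x, pD d' * pX d' x * e x z} := by

  intro d
  ext z
  simp only [Set.mem_setOf_eq]
  constructor
  · intro h
    -- get x with pX d x * e x z > 0
    obtain ⟨x, -, hx⟩ : ∃ x ∈ Finset.univ, 0 < pX d x * e x z := by
      by_contra hc
      push_neg at hc
      have : ∑ x, pX d x * e x z ≤ 0 :=
        Finset.sum_nonpos fun x hx => hc x hx
      linarith
    have hez : 0 < e x z := by
      rcases lt_or_ge 0 (e x z) with h'|h'
      · exact h'
      · nlinarith [hpX d x]
    have key : 0 < ∑ d', pD d' * pX d' x * e x z := by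
      have : ∑ d', pD d' * pX d' x * e x z = (∑ d', pD d' * pX d' x) * e x z := by
        rw [Finset.sum_mul]
      rw [this]
      exact mul_pos (hfull x) hez
    calc (0:ℝ) < ∑ d', pD d' * pX d' x * e x z := key
      _ ≤ ∑ d', ∑ x, pD d' * pX d' x * e x z := by
          apply Finset.sum_le_sum
          intro d' _
          exact Finset.single_le_sum (f := fun x => pD d' * pX d' x * e x z)
            (fun x _ => mul_nonneg (mul_nonneg (hpD d').le (hpX d' x)) (he x z))
            (Finset.mem_univ x)
  · intro h
    obtain ⟨d', -, hd'⟩ : ∃ d' ∈ Finset.univ, 0 < ∑ x, pD d' * pX d' x * e x z := by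
      by_contra hc
      push_neg at hc
      have : ∑ d', ∑ x, pD d' * pX d' x * e x z ≤ 0 :=
        Finset.sum_nonpos fun d' hd' => hc d' hd'
      linarith
    obtain ⟨x, -, hx⟩ : ∃ x ∈ Finset.univ, 0 < pD d' * pX d' x * e x z := by
      by_contra hc
      push_neg at hc
      have : ∑ x, pD d' * pX d' x * e x z ≤ 0 :=
        Finset.sum_nonpos fun x hx => hc x hx
      linarith
    have hez : 0 < e x z := by
      rcases lt_or_ge 0 (e x z) with h'|h'
      · exact h'
      · have := mul_nonpos_of_nonneg_of_nonpos (mul_nonneg (hpD d').le (hpX d' x)) h'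
        linarith
    obtain ⟨x', hx'pos, hx'eq⟩ := hDA d x
    have hez' : 0 < e x' z := by
      rw [hinv x' x hx'eq]; exact hez
    calc (0:ℝ) < pX d x' * e x' z := mul_pos hx'pos hez'
      _ ≤ ∑ x, pX d x * e x z :=
        Finset.single_le_sum (f := fun x => pX d x * e x z)
          (fun x _ => mul_nonneg (hpX d x) (he x z)) (Finset.mem_univ x')
end

section
/- (Bayes invariance under generalized covariate shift implies equality of mixture and per-domain Bayes risks.) Let (D, X, Y) be distributed as p(D)p(X,Y|D) on finite spaces with p(D) of full support, and suppose the unique Bayes predictor F* from X (for the mixture distribution p(X,Y) = Σ_d p(d)p(X,Y|d)) is strictly optimal for every domain-conditional p(Y|x,d) on the support. Then: (a) R(Y|X) = Σ_d p(d) R_d(Y|X), where R_d(Y|X) is the domain-d Bayes risk from X; and (b) for any encoder p(Z|X) (with Z ⟂ (Y,D) | X), if R(Y|Z) = R(Y|X) then R_d(Y|Z) = R_d(Y|X) for every domain d. -/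
private lemma iInf_eq_of_min {ι : Type*} [Finite ι] [Nonempty ι] (f : ι → ℝ) (i0 : ι)
    (h : ∀ i, f i0 ≤ f i) : (⨅ i, f i) = f i0 :=
  le_antisymm (ciInf_le (Finite.bddBelow_range f) i0) (le_ciInf h)

/-- Bayes invariance under generalized covariate shift implies equality of mixture
and per-domain Bayes risks: (a) `R(Y|X) = Σ_d p(d) R_d(Y|X)`, and (b) for any
encoder with `R(Y|Z) = R(Y|X)` we also have `R_d(Y|Z) = R_d(Y|X)` in every
domain `d`. -/
theorem mixture_and_per_domain_bayes_risks
    {𝒟 𝒳 𝒴 𝒵 𝒜 : Type*}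
    [Fintype 𝒟] [Fintype 𝒳] [Fintype 𝒴] [Fintype 𝒵] [Fintype 𝒜] [Nonempty 𝒜]
    (pD : 𝒟 → ℝ) (hpD : ∀ d, 0 < pD d) (hpD1 : ∑ d, pD d = 1)
    (pXY : 𝒟 → 𝒳 → 𝒴 → ℝ) (hpXY : ∀ d x y, 0 ≤ pXY d x y)
    (hpXY1 : ∀ d, ∑ x, ∑ y, pXY d x y = 1)
    (ℓ : 𝒴 → 𝒜 → ℝ)
    (F : 𝒳 → 𝒜)
    -- unique pointwise strictly optimal Bayes predictor from X for the mixture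
    (hF : ∀ x, 0 < (∑ d, pD d * ∑ y, pXY d x y) → ∀ a, a ≠ F x →
      (∑ d, pD d * ∑ y, pXY d x y * ℓ y (F x)) < ∑ d, pD d * ∑ y, pXY d x y * ℓ y a)
    -- generalized covariate shift: F is strictly optimal in every domain
    (hGCS : ∀ d x, 0 < (∑ y, pXY d x y) → ∀ a, a ≠ F x →
      (∑ y, pXY d x y * ℓ y (F x)) < ∑ y, pXY d x y * ℓ y a) :
    -- (a) mixture Bayes risk decomposes as the p(d)-average of per-domain Bayes risks
    ((⨅ f : 𝒳 → 𝒜, ∑ d, ∑ x, ∑ y, pD d * pXY d x y * ℓ y (f x))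
        = ∑ d, pD d * ⨅ f : 𝒳 → 𝒜, ∑ x, ∑ y, pXY d x y * ℓ y (f x))
    -- (b) any encoder achieving R(Y|Z) = R(Y|X) achieves R_d(Y|Z) = R_d(Y|X) for all d
    ∧ (∀ e : 𝒳 → 𝒵 → ℝ, (∀ x z, 0 ≤ e x z) → (∀ x, ∑ z, e x z = 1) →
        ((⨅ g : 𝒵 → 𝒜, ∑ d, ∑ x, ∑ y, ∑ z, pD d * pXY d x y * e x z * ℓ y (g z))
            = ⨅ f : 𝒳 → 𝒜, ∑ d, ∑ x, ∑ y, pD d * pXY d x y * ℓ y (f x)) →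
        ∀ d : 𝒟,
          (⨅ g : 𝒵 → 𝒜, ∑ x, ∑ y, ∑ z, pXY d x y * e x z * ℓ y (g z))
            = ⨅ f : 𝒳 → 𝒜, ∑ x, ∑ y, pXY d x y * ℓ y (f x)) := by
  classical
  -- Per-domain pointwise optimality of F (non-strict, handles zero support).
  have hA : ∀ d x a, (∑ y, pXY d x y * ℓ y (F x)) ≤ ∑ y, pXY d x y * ℓ y a := by
    intro d x a
    by_cases ha : a = F x
    · subst ha; exact le_rfl
    · rcases (Finset.sum_nonneg fun y _ => hpXY d x y).lt_or_eq with hpos | hzero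
      · exact (hGCS d x hpos a ha).le
      · have hz : ∀ y, pXY d x y = 0 := fun y =>
          (Finset.sum_eq_zero_iff_of_nonneg (fun y _ => hpXY d x y)).mp hzero.symm y
            (Finset.mem_univ y)
        have h1 : (∑ y, pXY d x y * ℓ y (F x)) = 0 :=
          Finset.sum_eq_zero fun y _ => by rw [hz y, zero_mul]
        have h2 : (∑ y, pXY d x y * ℓ y a) = 0 :=
          Finset.sum_eq_zero fun y _ => by rw [hz y, zero_mul]
        rw [h1, h2]
  -- Mixture pointwise optimality of F.
  have hB : ∀ x a, (∑ d, pD d * ∑ y, pXY d x y * ℓ y (F x))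
      ≤ ∑ d, pD d * ∑ y, pXY d x y * ℓ y a := fun x a =>
    Finset.sum_le_sum fun d _ => mul_le_mul_of_nonneg_left (hA d x a) (hpD d).le
  -- Per-domain Bayes risk is attained at F.
  have hdF : ∀ d, (⨅ f : 𝒳 → 𝒜, ∑ x, ∑ y, pXY d x y * ℓ y (f x))
      = ∑ x, ∑ y, pXY d x y * ℓ y (F x) := fun d =>
    iInf_eq_of_min _ F fun f => Finset.sum_le_sum fun x _ => hA d x (f x)
  -- Mixture Bayes risk is attained at F.
  have hmixF : (⨅ f : 𝒳 → 𝒜, ∑ d, ∑ x, ∑ y, pD d * pXY d x y * ℓ y (f x))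
      = ∑ d, ∑ x, ∑ y, pD d * pXY d x y * ℓ y (F x) := by
    refine iInf_eq_of_min _ F fun f => ?_
    refine Finset.sum_le_sum fun d _ => Finset.sum_le_sum fun x _ => ?_
    have := mul_le_mul_of_nonneg_left (hA d x (f x)) (hpD d).le
    simpa [Finset.mul_sum, mul_assoc] using this
  constructor
  · -- part (a)
    rw [hmixF]
    have hrepl : ∀ d, pD d * (⨅ f : 𝒳 → 𝒜, ∑ x, ∑ y, pXY d x y * ℓ y (f x))
        = pD d * ∑ x, ∑ y, pXY d x y * ℓ y (F x) := fun d => by rw [hdF d]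
    rw [Finset.sum_congr rfl fun d _ => hrepl d]
    refine Finset.sum_congr rfl fun d _ => ?_
    simp [Finset.mul_sum, mul_assoc]
  · -- part (b)
    intro e he he1 hEq d
    -- rearrangement of the per-domain Z-risk
    have ZdForm : ∀ (d : 𝒟) (g : 𝒵 → 𝒜), (∑ x, ∑ y, ∑ z, pXY d x y * e x z * ℓ y (g z))
        = ∑ x, ∑ z, e x z * ∑ y, pXY d x y * ℓ y (g z) := by
      intro d g
      refine Finset.sum_congr rfl fun x _ => ?_
      rw [Finset.sum_comm]
      refine Finset.sum_congr rfl fun z _ => ?_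
      rw [Finset.mul_sum]
      exact Finset.sum_congr rfl fun y _ => by ring
    -- rearrangement of the mixture Z-risk
    have ZmixForm : ∀ g : 𝒵 → 𝒜,
        (∑ d, ∑ x, ∑ y, ∑ z, pD d * pXY d x y * e x z * ℓ y (g z))
        = ∑ x, ∑ z, e x z * ∑ d, pD d * ∑ y, pXY d x y * ℓ y (g z) := by
      intro g
      rw [Finset.sum_comm]
      refine Finset.sum_congr rfl fun x _ => ?_
      have step : ∀ d', (∑ y, ∑ z, pD d' * pXY d' x y * e x z * ℓ y (g z))
          = ∑ z, e x z * (pD d' * ∑ y, pXY d' x y * ℓ y (g z)) := by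
        intro d'
        rw [Finset.sum_comm]
        refine Finset.sum_congr rfl fun z _ => ?_
        rw [Finset.mul_sum, Finset.mul_sum]
        exact Finset.sum_congr rfl fun y _ => by ring
      rw [Finset.sum_congr rfl fun d' _ => step d', Finset.sum_comm]
      exact Finset.sum_congr rfl fun z _ => by rw [Finset.mul_sum]
    -- mixture X-risk at F in (x,z)-form
    have XmixForm : (∑ d, ∑ x, ∑ y, pD d * pXY d x y * ℓ y (F x))
        = ∑ x, ∑ z, e x z * ∑ d, pD d * ∑ y, pXY d x y * ℓ y (F x) := by
      rw [Finset.sum_comm]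
      refine Finset.sum_congr rfl fun x _ => ?_
      rw [← Finset.sum_mul, he1 x, one_mul]
      simp [Finset.mul_sum, mul_assoc]
    -- data processing per domain: any Z-predictor is no better than F from X
    have hZd_ge : ∀ g : 𝒵 → 𝒜, (∑ x, ∑ y, pXY d x y * ℓ y (F x))
        ≤ ∑ x, ∑ y, ∑ z, pXY d x y * e x z * ℓ y (g z) := by
      intro g
      rw [ZdForm d g]
      have hid : (∑ x, ∑ y, pXY d x y * ℓ y (F x))
          = ∑ x, ∑ z, e x z * ∑ y, pXY d x y * ℓ y (F x) := by
        refine Finset.sum_congr rfl fun x _ => ?_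
        rw [← Finset.sum_mul, he1 x, one_mul]
      rw [hid]
      exact Finset.sum_le_sum fun x _ => Finset.sum_le_sum fun z _ =>
        mul_le_mul_of_nonneg_left (hA d x (g z)) (he x z)
    -- a minimizer of the mixture Z-risk
    obtain ⟨g₀, hg₀⟩ := Finite.exists_min
      (fun g : 𝒵 → 𝒜 => ∑ d, ∑ x, ∑ y, ∑ z, pD d * pXY d x y * e x z * ℓ y (g z))
    have hZinf : (⨅ g : 𝒵 → 𝒜, ∑ d, ∑ x, ∑ y, ∑ z, pD d * pXY d x y * e x z * ℓ y (g z))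
        = ∑ d, ∑ x, ∑ y, ∑ z, pD d * pXY d x y * e x z * ℓ y (g₀ z) :=
      iInf_eq_of_min _ g₀ hg₀
    have hEq0 : (∑ d, ∑ x, ∑ y, ∑ z, pD d * pXY d x y * e x z * ℓ y (g₀ z))
        = ∑ d, ∑ x, ∑ y, pD d * pXY d x y * ℓ y (F x) := by
      rw [← hZinf, hEq, hmixF]
    -- termwise equality over (x, z)
    have hnn : ∀ x z, 0 ≤ e x z * (∑ d', pD d' * ∑ y, pXY d' x y * ℓ y (g₀ z))
        - e x z * (∑ d', pD d' * ∑ y, pXY d' x y * ℓ y (F x)) := fun x z =>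
      sub_nonneg.mpr (mul_le_mul_of_nonneg_left (hB x (g₀ z)) (he x z))
    have h0 : (∑ x, ∑ z, (e x z * (∑ d', pD d' * ∑ y, pXY d' x y * ℓ y (g₀ z))
        - e x z * (∑ d', pD d' * ∑ y, pXY d' x y * ℓ y (F x)))) = 0 := by
      have h' := hEq0
      rw [ZmixForm g₀, XmixForm] at h'
      simp only [Finset.sum_sub_distrib]
      rw [h', sub_self]
    have hterm : ∀ x z, e x z * (∑ d', pD d' * ∑ y, pXY d' x y * ℓ y (g₀ z))
        = e x z * (∑ d', pD d' * ∑ y, pXY d' x y * ℓ y (F x)) := by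
      intro x z
      have houter := (Finset.sum_eq_zero_iff_of_nonneg
        (fun x _ => Finset.sum_nonneg fun z _ => hnn x z)).mp h0 x (Finset.mem_univ x)
      have hinner := (Finset.sum_eq_zero_iff_of_nonneg
        (fun z _ => hnn x z)).mp houter z (Finset.mem_univ z)
      linarith
    -- on the support, the Z-minimizer must agree with F
    have hkey : ∀ x z, 0 < e x z → 0 < (∑ y, pXY d x y) → g₀ z = F x := by
      intro x z hez hmarg
      by_contra hne
      have hmix : 0 < ∑ d', pD d' * ∑ y, pXY d' x y :=
        Finset.sum_pos'
          (fun d' _ => mul_nonneg (hpD d').le (Finset.sum_nonneg fun y _ => hpXY d' x y))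
          ⟨d, Finset.mem_univ d, mul_pos (hpD d) hmarg⟩
      have hlt := mul_lt_mul_of_pos_left (hF x hmix (g₀ z) hne) hez
      have := hterm x z
      linarith
    -- domain-d risk of g₀ equals the domain-d Bayes risk from X
    have hg₀d : (∑ x, ∑ y, ∑ z, pXY d x y * e x z * ℓ y (g₀ z))
        = ∑ x, ∑ y, pXY d x y * ℓ y (F x) := by
      rw [ZdForm d g₀]
      have hpt : ∀ x z, e x z * ∑ y, pXY d x y * ℓ y (g₀ z)
          = e x z * ∑ y, pXY d x y * ℓ y (F x) := by
        intro x z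
        rcases (he x z).lt_or_eq with hez | hez
        · rcases (Finset.sum_nonneg fun y _ => hpXY d x y).lt_or_eq with hmarg | hmarg
          · rw [hkey x z hez hmarg]
          · have hz : ∀ y, pXY d x y = 0 := fun y =>
              (Finset.sum_eq_zero_iff_of_nonneg (fun y _ => hpXY d x y)).mp hmarg.symm y
                (Finset.mem_univ y)
            have h1 : (∑ y, pXY d x y * ℓ y (g₀ z)) = 0 :=
              Finset.sum_eq_zero fun y _ => by rw [hz y, zero_mul]
            have h2 : (∑ y, pXY d x y * ℓ y (F x)) = 0 :=
              Finset.sum_eq_zero fun y _ => by rw [hz y, zero_mul]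
            rw [h1, h2]
        · rw [← hez, zero_mul, zero_mul]
      rw [Finset.sum_congr rfl fun x _ => Finset.sum_congr rfl fun z _ => hpt x z]
      refine Finset.sum_congr rfl fun x _ => ?_
      rw [← Finset.sum_mul, he1 x, one_mul]
    rw [hdF d]
    exact le_antisymm
      ((ciInf_le (Finite.bddBelow_range _) g₀).trans (le_of_eq hg₀d))
      (le_ciInf hZd_ge)
end

section
/- (Optimal predictors for the mixture are optimal in every domain.) Under the setting of the agreement lemma (finite spaces, Z ⟂ (Y,D)|X, unique Bayes predictor from X, generalized covariate shift), let p(Z|X) be an encoder with R(Y|Z) = R(Y|X). Then every Bayes-optimal predictor from Z for the mixture distribution is also a domain-d risk minimizer for every domain d ∈ 𝒟: argmin_g E_{p(Z,Y)}[ℓ(Y,g(Z))] ⊆ argmin_g E_{p(Z,Y|d)}[ℓ(Y,g(Z))]. Consequently, for all pairs of domains (ds, dt), inf over f ∈ argmin of the ds-risk of the dt-risk of f equals the dt-domain Bayes risk from Z. -/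
private lemma sum_swap3' {α β γ : Type*} [Fintype α] [Fintype β] [Fintype γ]
    (f : α → β → γ → ℝ) :
    ∑ a, ∑ b, ∑ c, f a b c = ∑ c, ∑ a, ∑ b, f a b c :=
  (Finset.sum_congr rfl fun _ _ => Finset.sum_comm).trans Finset.sum_comm

/-- Optimal predictors for the mixture are optimal in every domain: if the encoder
achieves `R(Y|Z) = R(Y|X)` (under generalized covariate shift and a unique Bayes
predictor from `X`), then every mixture-Bayes-optimal predictor from `Z` minimizes
the domain-`d` risk for every `d`; consequently, for all `(ds, dt)`, the best-case
transfer (infimum over `ds`-risk minimizers of the `dt`-risk) equals the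
`dt`-domain Bayes risk from `Z`. -/
theorem mixture_optimal_predictors_are_domain_optimal
    {𝒟 𝒳 𝒴 𝒵 𝒜 : Type*}
    [Fintype 𝒟] [Fintype 𝒳] [Fintype 𝒴] [Fintype 𝒵] [Fintype 𝒜] [Nonempty 𝒜]
    (pD : 𝒟 → ℝ) (hpD : ∀ d, 0 < pD d) (hpD1 : ∑ d, pD d = 1)
    (pXY : 𝒟 → 𝒳 → 𝒴 → ℝ) (hpXY : ∀ d x y, 0 ≤ pXY d x y)
    (hpXY1 : ∀ d, ∑ x, ∑ y, pXY d x y = 1)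
    (ℓ : 𝒴 → 𝒜 → ℝ)
    (F : 𝒳 → 𝒜)
    -- unique pointwise strictly optimal Bayes predictor from X (mixture)
    (hF : ∀ x, 0 < (∑ d, pD d * ∑ y, pXY d x y) → ∀ a, a ≠ F x →
      (∑ d, pD d * ∑ y, pXY d x y * ℓ y (F x)) < ∑ d, pD d * ∑ y, pXY d x y * ℓ y a)
    -- generalized covariate shift
    (hGCS : ∀ d x, 0 < (∑ y, pXY d x y) → ∀ a, a ≠ F x →
      (∑ y, pXY d x y * ℓ y (F x)) < ∑ y, pXY d x y * ℓ y a)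
    (e : 𝒳 → 𝒵 → ℝ) (he : ∀ x z, 0 ≤ e x z) (he1 : ∀ x, ∑ z, e x z = 1)
    -- R(Y|Z) = R(Y|X)
    (hRZ : (⨅ g : 𝒵 → 𝒜, ∑ d, ∑ x, ∑ y, ∑ z, pD d * pXY d x y * e x z * ℓ y (g z))
        = ⨅ f : 𝒳 → 𝒜, ∑ d, ∑ x, ∑ y, pD d * pXY d x y * ℓ y (f x)) :
    -- every mixture-optimal predictor from Z is a domain-d risk minimizer for all d
    ((∀ g : 𝒵 → 𝒜,
        (∀ g' : 𝒵 → 𝒜, (∑ d, ∑ x, ∑ y, ∑ z, pD d * pXY d x y * e x z * ℓ y (g z))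
            ≤ ∑ d, ∑ x, ∑ y, ∑ z, pD d * pXY d x y * e x z * ℓ y (g' z)) →
        ∀ d : 𝒟, ∀ g' : 𝒵 → 𝒜,
          (∑ x, ∑ y, ∑ z, pXY d x y * e x z * ℓ y (g z))
            ≤ ∑ x, ∑ y, ∑ z, pXY d x y * e x z * ℓ y (g' z))
    -- best-case transfer equals the target-domain Bayes risk from Z
    ∧ ∀ ds dt : 𝒟,
        sInf {r : ℝ | ∃ f : 𝒵 → 𝒜,
            (∀ g : 𝒵 → 𝒜, (∑ x, ∑ y, ∑ z, pXY ds x y * e x z * ℓ y (f z))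
                ≤ ∑ x, ∑ y, ∑ z, pXY ds x y * e x z * ℓ y (g z))
            ∧ r = ∑ x, ∑ y, ∑ z, pXY dt x y * e x z * ℓ y (f z)}
          = ⨅ f : 𝒵 → 𝒜, ∑ x, ∑ y, ∑ z, pXY dt x y * e x z * ℓ y (f z)) := by
  classical
  -- conditional risks
  set r : 𝒳 → 𝒜 → ℝ := fun x a => ∑ d, pD d * ∑ y, pXY d x y * ℓ y a with hr
  set s : 𝒟 → 𝒳 → 𝒜 → ℝ := fun d x a => ∑ y, pXY d x y * ℓ y a with hs
  -- if the mixture marginal at x vanishes, everything vanishes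
  have hq0 : ∀ x, (∑ d, pD d * ∑ y, pXY d x y) = 0 → ∀ d y, pXY d x y = 0 := by
    intro x hx d y
    have h1 : ∀ d ∈ (Finset.univ : Finset 𝒟), 0 ≤ pD d * ∑ y, pXY d x y :=
      fun d _ => mul_nonneg (hpD d).le (Finset.sum_nonneg fun y _ => hpXY d x y)
    have h2 := (Finset.sum_eq_zero_iff_of_nonneg h1).mp hx d (Finset.mem_univ d)
    have h3 : (∑ y, pXY d x y) = 0 := by
      rcases mul_eq_zero.mp h2 with h | h
      · exact absurd h (hpD d).ne'
      · exact h
    exact (Finset.sum_eq_zero_iff_of_nonneg fun y _ => hpXY d x y).mp h3 y (Finset.mem_univ y)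
  have hm0 : ∀ d x, (∑ y, pXY d x y) = 0 → ∀ a, s d x a = 0 := by
    intro d x hx a
    have := (Finset.sum_eq_zero_iff_of_nonneg fun y _ => hpXY d x y).mp hx
    simp only [hs]
    exact Finset.sum_eq_zero fun y _ => by rw [this y (Finset.mem_univ y), zero_mul]
  -- F is pointwise optimal (non-strict, everywhere)
  have hrF : ∀ x a, r x (F x) ≤ r x a := by
    intro x a
    by_cases hq : 0 < ∑ d, pD d * ∑ y, pXY d x y
    · by_cases ha : a = F x
      · rw [ha]
      · exact (hF x hq a ha).le
    · have hq' : (∑ d, pD d * ∑ y, pXY d x y) = 0 :=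
        le_antisymm (not_lt.mp hq)
          (Finset.sum_nonneg fun d _ =>
            mul_nonneg (hpD d).le (Finset.sum_nonneg fun y _ => hpXY d x y))
      have hz : ∀ b, r x b = 0 := fun b => by
        simp only [hr]
        exact Finset.sum_eq_zero fun d _ => by
          rw [Finset.sum_eq_zero fun y _ => by rw [hq0 x hq' d y, zero_mul], mul_zero]
      rw [hz a, hz (F x)]
  have hsF : ∀ d x a, s d x (F x) ≤ s d x a := by
    intro d x a
    by_cases hm : 0 < ∑ y, pXY d x y
    · by_cases ha : a = F x
      · rw [ha]
      · exact (hGCS d x hm a ha).le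
    · have hm' : (∑ y, pXY d x y) = 0 :=
        le_antisymm (not_lt.mp hm) (Finset.sum_nonneg fun y _ => hpXY d x y)
      rw [hm0 d x hm' a, hm0 d x hm' (F x)]
  -- rearrangement of the three risks
  have hXrw : ∀ f : 𝒳 → 𝒜,
      (∑ d, ∑ x, ∑ y, pD d * pXY d x y * ℓ y (f x)) = ∑ x, r x (f x) := by
    intro f
    rw [Finset.sum_comm]
    refine Finset.sum_congr rfl fun x _ => ?_
    simp only [hr, Finset.mul_sum]
    exact Finset.sum_congr rfl fun d _ => Finset.sum_congr rfl fun y _ => by ring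
  have hZrw : ∀ g : 𝒵 → 𝒜,
      (∑ d, ∑ x, ∑ y, ∑ z, pD d * pXY d x y * e x z * ℓ y (g z))
        = ∑ x, ∑ z, e x z * r x (g z) := by
    intro g
    rw [Finset.sum_comm]
    refine Finset.sum_congr rfl fun x _ => ?_
    rw [sum_swap3' fun d y z => pD d * pXY d x y * e x z * ℓ y (g z)]
    refine Finset.sum_congr rfl fun z _ => ?_
    simp only [hr, Finset.mul_sum]
    exact Finset.sum_congr rfl fun d _ => Finset.sum_congr rfl fun y _ => by ring
  have hDrw : ∀ (d : 𝒟) (g : 𝒵 → 𝒜),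
      (∑ x, ∑ y, ∑ z, pXY d x y * e x z * ℓ y (g z))
        = ∑ x, ∑ z, e x z * s d x (g z) := by
    intro d g
    refine Finset.sum_congr rfl fun x _ => ?_
    rw [Finset.sum_comm]
    refine Finset.sum_congr rfl fun z _ => ?_
    simp only [hs, Finset.mul_sum]
    exact Finset.sum_congr rfl fun y _ => by ring
  -- Bayes risk from X is attained at F
  have hXmin : ∀ f : 𝒳 → 𝒜, (∑ x, r x (F x)) ≤ ∑ x, r x (f x) :=
    fun f => Finset.sum_le_sum fun x _ => hrF x (f x)
  have hinfX : (⨅ f : 𝒳 → 𝒜, ∑ d, ∑ x, ∑ y, pD d * pXY d x y * ℓ y (f x))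
      = ∑ x, r x (F x) := by
    refine le_antisymm ?_ ?_
    · have := ciInf_le (f := fun f : 𝒳 → 𝒜 => ∑ d, ∑ x, ∑ y, pD d * pXY d x y * ℓ y (f x))
        ⟨∑ x, r x (F x), by rintro _ ⟨f, rfl⟩; dsimp only; rw [hXrw f]; exact hXmin f⟩ F
      rwa [hXrw F] at this
    · exact le_ciInf fun f => by rw [hXrw f]; exact hXmin f
  -- lower bound for every Z-predictor
  have hZlow : ∀ g : 𝒵 → 𝒜, (∑ x, r x (F x)) ≤ ∑ x, ∑ z, e x z * r x (g z) := by
    intro g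
    refine Finset.sum_le_sum fun x _ => ?_
    calc r x (F x) = (∑ z, e x z) * r x (F x) := by rw [he1 x, one_mul]
      _ = ∑ z, e x z * r x (F x) := Finset.sum_mul _ _ _
      _ ≤ ∑ z, e x z * r x (g z) :=
        Finset.sum_le_sum fun z _ => mul_le_mul_of_nonneg_left (hrF x (g z)) (he x z)
  -- Part 1
  have part1 : ∀ g : 𝒵 → 𝒜,
      (∀ g' : 𝒵 → 𝒜, (∑ d, ∑ x, ∑ y, ∑ z, pD d * pXY d x y * e x z * ℓ y (g z))
          ≤ ∑ d, ∑ x, ∑ y, ∑ z, pD d * pXY d x y * e x z * ℓ y (g' z)) →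
      ∀ d : 𝒟, ∀ g' : 𝒵 → 𝒜,
        (∑ x, ∑ y, ∑ z, pXY d x y * e x z * ℓ y (g z))
          ≤ ∑ x, ∑ y, ∑ z, pXY d x y * e x z * ℓ y (g' z) := by
    intro g hg d g'
    -- g attains the mixture Bayes risk, which equals the X-Bayes risk
    have hgeq : (∑ x, ∑ z, e x z * r x (g z)) = ∑ x, r x (F x) := by
      refine le_antisymm ?_ (hZlow g)
      have h1 : (∑ d, ∑ x, ∑ y, ∑ z, pD d * pXY d x y * e x z * ℓ y (g z))
          ≤ ⨅ g' : 𝒵 → 𝒜, ∑ d, ∑ x, ∑ y, ∑ z, pD d * pXY d x y * e x z * ℓ y (g' z) :=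
        le_ciInf hg
      rw [hZrw g] at h1
      rw [hRZ, hinfX] at h1
      exact h1
    -- equality forces g z = F x on the support
    have hkey : ∀ x z, 0 < e x z → 0 < (∑ d, pD d * ∑ y, pXY d x y) → g z = F x := by
      intro x z hez hqx
      by_contra hne
      -- the double sum of nonnegative gaps is zero, so each gap is zero
      have hsum0 : (∑ x, ∑ z, (e x z * r x (g z) - e x z * r x (F x))) = 0 := by
        have : (∑ x, ∑ z, e x z * r x (F x)) = ∑ x, r x (F x) := by
          refine Finset.sum_congr rfl fun x _ => ?_
          rw [← Finset.sum_mul, he1 x, one_mul]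
        simp only [Finset.sum_sub_distrib]
        rw [hgeq, this, sub_self]
      have hnn : ∀ x ∈ (Finset.univ : Finset 𝒳), 0 ≤ ∑ z, (e x z * r x (g z) - e x z * r x (F x)) :=
        fun x _ => Finset.sum_nonneg fun z _ =>
          sub_nonneg.mpr (mul_le_mul_of_nonneg_left (hrF x (g z)) (he x z))
      have hx0 := (Finset.sum_eq_zero_iff_of_nonneg hnn).mp hsum0 x (Finset.mem_univ x)
      have hnn2 : ∀ z ∈ (Finset.univ : Finset 𝒵), 0 ≤ e x z * r x (g z) - e x z * r x (F x) :=
        fun z _ => sub_nonneg.mpr (mul_le_mul_of_nonneg_left (hrF x (g z)) (he x z))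
      have hz0 := (Finset.sum_eq_zero_iff_of_nonneg hnn2).mp hx0 z (Finset.mem_univ z)
      have hreq : r x (g z) = r x (F x) := by
        have := sub_eq_zero.mp hz0
        exact mul_left_cancel₀ hez.ne' this
      exact absurd hreq (ne_of_gt (hF x hqx (g z) hne))
    -- hence g achieves the pointwise domain optimum everywhere
    have hsz : ∀ z x, e x z * s d x (g z) = e x z * s d x (F x) := by
      intro z x
      by_cases hez : 0 < e x z
      · by_cases hm : 0 < ∑ y, pXY d x y
        · have hqx : 0 < ∑ d', pD d' * ∑ y, pXY d' x y :=
            Finset.sum_pos' (fun d' _ => mul_nonneg (hpD d').le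
                (Finset.sum_nonneg fun y _ => hpXY d' x y))
              ⟨d, Finset.mem_univ d, mul_pos (hpD d) hm⟩
          rw [hkey x z hez hqx]
        · have hm' : (∑ y, pXY d x y) = 0 :=
            le_antisymm (not_lt.mp hm) (Finset.sum_nonneg fun y _ => hpXY d x y)
          rw [hm0 d x hm' (g z), hm0 d x hm' (F x)]
      · have : e x z = 0 := le_antisymm (not_lt.mp hez) (he x z)
        rw [this, zero_mul, zero_mul]
    have hDg : (∑ x, ∑ z, e x z * s d x (g z)) = ∑ x, s d x (F x) := by
      refine Finset.sum_congr rfl fun x _ => ?_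
      rw [Finset.sum_congr rfl fun z _ => hsz z x, ← Finset.sum_mul, he1 x, one_mul]
    have hDlow : (∑ x, s d x (F x)) ≤ ∑ x, ∑ z, e x z * s d x (g' z) := by
      refine Finset.sum_le_sum fun x _ => ?_
      calc s d x (F x) = (∑ z, e x z) * s d x (F x) := by rw [he1 x, one_mul]
        _ = ∑ z, e x z * s d x (F x) := Finset.sum_mul _ _ _
        _ ≤ ∑ z, e x z * s d x (g' z) :=
          Finset.sum_le_sum fun z _ => mul_le_mul_of_nonneg_left (hsF d x (g' z)) (he x z)
    rw [hDrw d g, hDrw d g', hDg]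
    exact hDlow
  refine ⟨part1, ?_⟩
  -- Part 2
  intro ds dt
  obtain ⟨g0, hg0⟩ := Finite.exists_min
    (fun g : 𝒵 → 𝒜 => ∑ d, ∑ x, ∑ y, ∑ z, pD d * pXY d x y * e x z * ℓ y (g z))
  have hds := part1 g0 hg0 ds
  have hdt := part1 g0 hg0 dt
  have hbddR : BddBelow (Set.range fun f : 𝒵 → 𝒜 =>
      ∑ x, ∑ y, ∑ z, pXY dt x y * e x z * ℓ y (f z)) :=
    ⟨∑ x, ∑ y, ∑ z, pXY dt x y * e x z * ℓ y (g0 z), by rintro _ ⟨f, rfl⟩; exact hdt f⟩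
  have hinf_dt : (⨅ f : 𝒵 → 𝒜, ∑ x, ∑ y, ∑ z, pXY dt x y * e x z * ℓ y (f z))
      = ∑ x, ∑ y, ∑ z, pXY dt x y * e x z * ℓ y (g0 z) :=
    le_antisymm (ciInf_le hbddR g0) (le_ciInf hdt)
  have hmem : (∑ x, ∑ y, ∑ z, pXY dt x y * e x z * ℓ y (g0 z)) ∈
      {r : ℝ | ∃ f : 𝒵 → 𝒜,
        (∀ g : 𝒵 → 𝒜, (∑ x, ∑ y, ∑ z, pXY ds x y * e x z * ℓ y (f z))
            ≤ ∑ x, ∑ y, ∑ z, pXY ds x y * e x z * ℓ y (g z))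
        ∧ r = ∑ x, ∑ y, ∑ z, pXY dt x y * e x z * ℓ y (f z)} := ⟨g0, hds, rfl⟩
  refine le_antisymm ?_ ?_
  · rw [hinf_dt]
    exact csInf_le ⟨∑ x, ∑ y, ∑ z, pXY dt x y * e x z * ℓ y (g0 z),
      by rintro _ ⟨f, _, rfl⟩; exact hdt f⟩ hmem
  · refine le_csInf ⟨_, hmem⟩ ?_
    rintro _ ⟨f, _, rfl⟩
    exact ciInf_le hbddR f
end
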